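/- arXiv:2512.06349 — 2 statements merged into one kernel-verified Lean document; each statement's English description precedes it below -/
import Mathlib

section
/- Assume R₀ := BᵀB + σ²·B̄ᵀB̄ is positive definite. Let λ ∈ ℝ and let P be a symmetric positive definite n×n matrix. Then the following are equivalent: (i) for every x ∈ ℝⁿ, e^λ·(xᵀPx) = inf_{v∈ℝ^m} E_ω[((A + Ā·ω)x + (B + B̄·ω)v)ᵀ·P·((A + Ā·ω)x + (B + B̄·ω)v)], where ω is a real Gaussian random variable with mean 0 and variance σ²; (ii) Φ(P) = γ·P with γ = e^λ (a nonlinear matrix eigenvalue relation). Moreover, when these hold, for each x ∈ ℝⁿ the infimum in (i) is attained uniquely at v = −K(P)·x. -/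
open Matrix MeasureTheory ProbabilityTheory
open scoped ENNReal Classical

noncomputable section

namespace SCS

/-! ### Matrix-analytic definitions -/

/-- Rayleigh-quotient definition of the largest eigenvalue of a symmetric matrix. -/
def lamMax {n : ℕ} (M : Matrix (Fin n) (Fin n) ℝ) : ℝ :=
  ⨆ x : {x : Fin n → ℝ // x ⬝ᵥ x = 1}, x.1 ⬝ᵥ M.mulVec x.1

/-- Rayleigh-quotient definition of the smallest eigenvalue of a symmetric matrix. -/
def lamMin {n : ℕ} (M : Matrix (Fin n) (Fin n) ℝ) : ℝ :=
  ⨅ x : {x : Fin n → ℝ // x ⬝ᵥ x = 1}, x.1 ⬝ᵥ M.mulVec x.1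

/-- Spectral norm (the operator norm induced by the Euclidean norm). -/
def specNorm {p q : ℕ} (M : Matrix (Fin p) (Fin q) ℝ) : ℝ :=
  Real.sqrt (lamMax (Mᵀ * M))

variable {n m : ℕ}

/-- `R(P) = BᵀPB + σ²·B̄ᵀPB̄`. -/
def Rop (σ : ℝ) (B Bbar : Matrix (Fin n) (Fin m) ℝ) (P : Matrix (Fin n) (Fin n) ℝ) :
    Matrix (Fin m) (Fin m) ℝ :=
  Bᵀ * P * B + σ ^ 2 • (Bbarᵀ * P * Bbar)

/-- `S(P) = AᵀPB + σ²·ĀᵀPB̄`. -/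
def Sop (σ : ℝ) (A Abar : Matrix (Fin n) (Fin n) ℝ) (B Bbar : Matrix (Fin n) (Fin m) ℝ)
    (P : Matrix (Fin n) (Fin n) ℝ) : Matrix (Fin n) (Fin m) ℝ :=
  Aᵀ * P * B + σ ^ 2 • (Abarᵀ * P * Bbar)

/-- `Φ(P) = AᵀPA + σ²·ĀᵀPĀ − S(P)·R(P)⁻¹·S(P)ᵀ`. -/
def Phi (σ : ℝ) (A Abar : Matrix (Fin n) (Fin n) ℝ) (B Bbar : Matrix (Fin n) (Fin m) ℝ)
    (P : Matrix (Fin n) (Fin n) ℝ) : Matrix (Fin n) (Fin n) ℝ :=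
  Aᵀ * P * A + σ ^ 2 • (Abarᵀ * P * Abar)
    - Sop σ A Abar B Bbar P * (Rop σ B Bbar P)⁻¹ * (Sop σ A Abar B Bbar P)ᵀ

/-- `K(P) = R(P)⁻¹·S(P)ᵀ`. -/
def Kgain (σ : ℝ) (A Abar : Matrix (Fin n) (Fin n) ℝ) (B Bbar : Matrix (Fin n) (Fin m) ℝ)
    (P : Matrix (Fin n) (Fin n) ℝ) : Matrix (Fin m) (Fin n) ℝ :=
  (Rop σ B Bbar P)⁻¹ * (Sop σ A Abar B Bbar P)ᵀ

/-- `C_A = λ_max(AAᵀ + σ²·ĀĀᵀ)`. -/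
def CA (σ : ℝ) (A Abar : Matrix (Fin n) (Fin n) ℝ) : ℝ :=
  lamMax (A * Aᵀ + σ ^ 2 • (Abar * Abarᵀ))

/-- `δ_τ = (τ/n)/((1−τ)·C_A + τ)`. -/
def deltaTau (σ : ℝ) (A Abar : Matrix (Fin n) (Fin n) ℝ) (τ : ℝ) : ℝ :=
  (τ / (n : ℝ)) / ((1 - τ) * CA σ A Abar + τ)

/-- The regularized normalized operator
`Φ̂_τ(P) = ((1−τ)·Φ(P) + (τ/n)·I) / Tr((1−τ)·Φ(P) + (τ/n)·I)`. -/
def PhiHat (σ : ℝ) (A Abar : Matrix (Fin n) (Fin n) ℝ) (B Bbar : Matrix (Fin n) (Fin m) ℝ)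
    (τ : ℝ) (P : Matrix (Fin n) (Fin n) ℝ) : Matrix (Fin n) (Fin n) ℝ :=
  (Matrix.trace ((1 - τ) • Phi σ A Abar B Bbar P
      + (τ / (n : ℝ)) • (1 : Matrix (Fin n) (Fin n) ℝ)))⁻¹ •
    ((1 - τ) • Phi σ A Abar B Bbar P + (τ / (n : ℝ)) • (1 : Matrix (Fin n) (Fin n) ℝ))

/-- Inverse of the positive-semidefinite square root (junk value `0` off the PSD cone),
so `invSqrt P = P^{−1/2}` for positive definite `P`. -/
def invSqrt {n : ℕ} (P : Matrix (Fin n) (Fin n) ℝ) : Matrix (Fin n) (Fin n) ℝ :=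
  if h : P.PosSemidef then
    ((h.1.eigenvectorUnitary : Matrix (Fin n) (Fin n) ℝ) *
      diagonal (fun i => Real.sqrt (h.1.eigenvalues i)) *
      (star h.1.eigenvectorUnitary : Matrix (Fin n) (Fin n) ℝ))⁻¹ else 0

/-- `L(P) = λ_min(P^{−1/2}·Φ(P)·P^{−1/2})`. -/
def Lval (σ : ℝ) (A Abar : Matrix (Fin n) (Fin n) ℝ) (B Bbar : Matrix (Fin n) (Fin m) ℝ)
    (P : Matrix (Fin n) (Fin n) ℝ) : ℝ :=
  lamMin (invSqrt P * Phi σ A Abar B Bbar P * invSqrt P)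

/-- `U(P) = λ_max(P^{−1/2}·Φ(P)·P^{−1/2})`. -/
def Uval (σ : ℝ) (A Abar : Matrix (Fin n) (Fin n) ℝ) (B Bbar : Matrix (Fin n) (Fin m) ℝ)
    (P : Matrix (Fin n) (Fin n) ℝ) : ℝ :=
  lamMax (invSqrt P * Phi σ A Abar B Bbar P * invSqrt P)

/-- The trace-normalized slice `S_a = {X symmetric : X ⪰ a·I, Tr X = 1}`. -/
def Slice (a : ℝ) : Set (Matrix (Fin n) (Fin n) ℝ) :=
  {X | X.IsSymm ∧ (X - a • (1 : Matrix (Fin n) (Fin n) ℝ)).PosSemidef ∧ X.trace = 1}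

/-- `α_A = ‖A‖² + σ²·‖Ā‖²` (spectral norms). -/
def alphaA (σ : ℝ) (A Abar : Matrix (Fin n) (Fin n) ℝ) : ℝ :=
  specNorm A ^ 2 + σ ^ 2 * specNorm Abar ^ 2

/-- `α_S = ‖A‖·‖B‖ + σ²·‖Ā‖·‖B̄‖`. -/
def alphaS (σ : ℝ) (A Abar : Matrix (Fin n) (Fin n) ℝ) (B Bbar : Matrix (Fin n) (Fin m) ℝ) : ℝ :=
  specNorm A * specNorm B + σ ^ 2 * specNorm Abar * specNorm Bbar

/-- `α_R = ‖B‖² + σ²·‖B̄‖²`. -/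
def alphaR (σ : ℝ) (B Bbar : Matrix (Fin n) (Fin m) ℝ) : ℝ :=
  specNorm B ^ 2 + σ ^ 2 * specNorm Bbar ^ 2

/-- `c_R(a) = 1/(a·λ_min(R₀))`. -/
def cR (σ : ℝ) (B Bbar : Matrix (Fin n) (Fin m) ℝ) (a : ℝ) : ℝ :=
  1 / (a * lamMin (Bᵀ * B + σ ^ 2 • (Bbarᵀ * Bbar)))

/-- `L_Φ(a) = α_A + 2·α_S²·c_R(a) + α_S²·α_R·c_R(a)²`. -/
def LPhi (σ : ℝ) (A Abar : Matrix (Fin n) (Fin n) ℝ) (B Bbar : Matrix (Fin n) (Fin m) ℝ)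
    (a : ℝ) : ℝ :=
  alphaA σ A Abar + 2 * alphaS σ A Abar B Bbar ^ 2 * cR σ B Bbar a
    + alphaS σ A Abar B Bbar ^ 2 * alphaR σ B Bbar * cR σ B Bbar a ^ 2

/-- `C_Φ(a) = α_A + α_S²·c_R(a)`. -/
def CPhi (σ : ℝ) (A Abar : Matrix (Fin n) (Fin n) ℝ) (B Bbar : Matrix (Fin n) (Fin m) ℝ)
    (a : ℝ) : ℝ :=
  alphaA σ A Abar + alphaS σ A Abar B Bbar ^ 2 * cR σ B Bbar a

/-- The contraction modulus `Λ(τ)`. -/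
def LambdaTau (σ : ℝ) (A Abar : Matrix (Fin n) (Fin n) ℝ) (B Bbar : Matrix (Fin n) (Fin m) ℝ)
    (τ : ℝ) : ℝ :=
  (1 - τ) * LPhi σ A Abar B Bbar (deltaTau σ A Abar τ) / τ
    + (1 - τ) * ((1 - τ) * CPhi σ A Abar B Bbar (deltaTau σ A Abar τ) + τ / (n : ℝ))
        * (n : ℝ) * LPhi σ A Abar B Bbar (deltaTau σ A Abar τ) / τ ^ 2

/-- The directional derivative `DΦ(P)[H]`. -/
def DPhi (σ : ℝ) (A Abar : Matrix (Fin n) (Fin n) ℝ) (B Bbar : Matrix (Fin n) (Fin m) ℝ)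
    (P H : Matrix (Fin n) (Fin n) ℝ) : Matrix (Fin n) (Fin n) ℝ :=
  Aᵀ * H * A + σ ^ 2 • (Abarᵀ * H * Abar)
    - (Aᵀ * H * B + σ ^ 2 • (Abarᵀ * H * Bbar)) * (Rop σ B Bbar P)⁻¹ * (Sop σ A Abar B Bbar P)ᵀ
    - Sop σ A Abar B Bbar P * (Rop σ B Bbar P)⁻¹ * (Bᵀ * H * A + σ ^ 2 • (Bbarᵀ * H * Abar))
    + Sop σ A Abar B Bbar P * (Rop σ B Bbar P)⁻¹ * (Bᵀ * H * B + σ ^ 2 • (Bbarᵀ * H * Bbar))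
        * (Rop σ B Bbar P)⁻¹ * (Sop σ A Abar B Bbar P)ᵀ

/-- `s_τ(P) = Tr((1−τ)·Φ(P) + (τ/n)·I)`. -/
def sTau (σ : ℝ) (A Abar : Matrix (Fin n) (Fin n) ℝ) (B Bbar : Matrix (Fin n) (Fin m) ℝ)
    (τ : ℝ) (P : Matrix (Fin n) (Fin n) ℝ) : ℝ :=
  Matrix.trace ((1 - τ) • Phi σ A Abar B Bbar P + (τ / (n : ℝ)) • (1 : Matrix (Fin n) (Fin n) ℝ))

/-- The directional derivative
`DΦ̂_τ(P)[H] = ((1−τ)/s_τ(P))·(DΦ(P)[H] − Φ̂_τ(P)·Tr(DΦ(P)[H]))`. -/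
def DPhiHat (σ : ℝ) (A Abar : Matrix (Fin n) (Fin n) ℝ) (B Bbar : Matrix (Fin n) (Fin m) ℝ)
    (τ : ℝ) (P H : Matrix (Fin n) (Fin n) ℝ) : Matrix (Fin n) (Fin n) ℝ :=
  ((1 - τ) / sTau σ A Abar B Bbar τ P) •
    (DPhi σ A Abar B Bbar P H
      - Matrix.trace (DPhi σ A Abar B Bbar P H) • PhiHat σ A Abar B Bbar τ P)

/-- The local Lipschitz modulus `Lip(P,τ) = sup{‖DΦ̂_τ(P)[H]‖ : H symmetric, ‖H‖ = 1}`. -/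
def LipMod (σ : ℝ) (A Abar : Matrix (Fin n) (Fin n) ℝ) (B Bbar : Matrix (Fin n) (Fin m) ℝ)
    (τ : ℝ) (P : Matrix (Fin n) (Fin n) ℝ) : ℝ :=
  ⨆ H : {H : Matrix (Fin n) (Fin n) ℝ // H.IsSymm ∧ specNorm H = 1},
    specNorm (DPhiHat σ A Abar B Bbar τ P H.1)

/-! ### Probabilistic definitions -/

/-- The Gaussian measure on `ℝ` with mean `0` and variance `σ²`. -/
def gauss (σ : ℝ) : Measure ℝ := gaussianReal 0 ⟨σ ^ 2, sq_nonneg σ⟩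

/-- The Gaussian expectation `E_ω[((A+Āω)x + (B+B̄ω)v)ᵀ·P·((A+Āω)x + (B+B̄ω)v)]`. -/
def qform (σ : ℝ) (A Abar : Matrix (Fin n) (Fin n) ℝ) (B Bbar : Matrix (Fin n) (Fin m) ℝ)
    (P : Matrix (Fin n) (Fin n) ℝ) (x : Fin n → ℝ) (v : Fin m → ℝ) : ℝ :=
  ∫ s, (((A + s • Abar).mulVec x + (B + s • Bbar).mulVec v) ⬝ᵥ
      P.mulVec ((A + s • Abar).mulVec x + (B + s • Bbar).mulVec v)) ∂(gauss σ)

/-- The data of the stochastic control system: a probability space `(Ω, F, Pr)`,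
system matrices `A, Ā, B, B̄`, a noise level `σ > 0`, an i.i.d. sequence `w` of
Gaussian random variables with mean `0` and variance `σ²`, and a sub-σ-algebra `G`
independent of the noise. -/
structure Ctx (n m : ℕ) (Ω : Type) [mΩ : MeasurableSpace Ω] where
  Pr : Measure Ω
  isProb : IsProbabilityMeasure Pr
  σ : ℝ
  hσ : 0 < σ
  A : Matrix (Fin n) (Fin n) ℝ
  Abar : Matrix (Fin n) (Fin n) ℝ
  B : Matrix (Fin n) (Fin m) ℝ
  Bbar : Matrix (Fin n) (Fin m) ℝ
  w : ℕ → Ω → ℝ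
  hw_meas : ∀ k, Measurable (w k)
  hw_gauss : ∀ k, Pr.map (w k) = gauss σ
  hw_iid : iIndepFun w Pr
  G : MeasurableSpace Ω
  hG : G ≤ mΩ
  hw_indep_G : Indep (⨆ k, MeasurableSpace.comap (w k) inferInstance) G Pr

variable {Ω : Type} [MeasurableSpace Ω]

/-- The filtration `F_k = G ∨ σ(ω₀, …, ω_{k−1})`. -/
def Ctx.Fk (C : Ctx n m Ω) (k : ℕ) : MeasurableSpace Ω :=
  C.G ⊔ ⨆ i ∈ Finset.range k, MeasurableSpace.comap (C.w i) inferInstance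

/-- Admissible policies: `u_k` is `F_k`-measurable and square-integrable. -/
def Ctx.Admissible (C : Ctx n m Ω) (u : ℕ → Ω → Fin m → ℝ) : Prop :=
  ∀ k, Measurable[C.Fk k] (u k) ∧ MemLp (u k) 2 C.Pr

/-- Admissible initial states: `G`-measurable and square-integrable. -/
def Ctx.InitOK (C : Ctx n m Ω) (x : Ω → Fin n → ℝ) : Prop :=
  Measurable[C.G] x ∧ MemLp x 2 C.Pr

/-- The state trajectory `x_{k+1} = (A + Ā·ω_k)x_k + (B + B̄·ω_k)u_k`. -/
def Ctx.traj (C : Ctx n m Ω) (x0 : Ω → Fin n → ℝ) (u : ℕ → Ω → Fin m → ℝ) :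
    ℕ → Ω → Fin n → ℝ
  | 0 => x0
  | k + 1 => fun s =>
      (C.A + C.w k s • C.Abar).mulVec (C.traj x0 u k s)
      + (C.B + C.w k s • C.Bbar).mulVec (u k s)

/-- `E[xᵀx]`. -/
def msSq {n : ℕ} (Pr : Measure Ω) (x : Ω → Fin n → ℝ) : ℝ := ∫ s, x s ⬝ᵥ x s ∂Pr

/-- The mean-square norm `‖x‖_ms = (E[xᵀx])^{1/2}`. -/
def msNorm {n : ℕ} (Pr : Measure Ω) (x : Ω → Fin n → ℝ) : ℝ := Real.sqrt (msSq Pr x)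

/-- The mean-square stabilizing rate `ρ(u)` of a policy. -/
def Ctx.rate (C : Ctx n m Ω) (u : ℕ → Ω → Fin m → ℝ) : ℝ :=
  sInf {ρ : ℝ | 0 ≤ ρ ∧ ∃ κ : ℝ, 0 ≤ κ ∧ ∀ x0, C.InitOK x0 → ∀ k : ℕ,
    msSq C.Pr (C.traj x0 u k) ≤ κ * ρ ^ (2 * k) * msSq C.Pr x0}

/-- The optimal stabilizing rate `ρ* = inf_{u ∈ U} ρ(u)`. -/
def Ctx.rhoStar (C : Ctx n m Ω) : ℝ :=
  sInf {r : ℝ | ∃ u, C.Admissible u ∧ r = C.rate u}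

/-- `η(x) = inf_{u ∈ U} sup_{k ∈ ℕ} ‖x_k‖_ms/(ρ*)^k` (with values in `[0,∞]`). -/
def Ctx.eta (C : Ctx n m Ω) (x : Ω → Fin n → ℝ) : ℝ≥0∞ :=
  ⨅ (u : ℕ → Ω → Fin m → ℝ) (_ : C.Admissible u),
    ⨆ k : ℕ, ENNReal.ofReal (msNorm C.Pr (C.traj x u k) / C.rhoStar ^ k)

/-- The per-trajectory mean-square stabilizing rate `ρ(u; x₀)`. -/
def Ctx.rateAt (C : Ctx n m Ω) (x0 : Ω → Fin n → ℝ) (u : ℕ → Ω → Fin m → ℝ) : ℝ :=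
  sInf {ρ : ℝ | 0 ≤ ρ ∧ ∃ κ : ℝ, 0 ≤ κ ∧ ∀ k : ℕ,
    msSq C.Pr (C.traj x0 u k) ≤ κ * ρ ^ (2 * k) * msSq C.Pr x0}

/-- The cost `J(x₀,u) = limsup_k (1/k)·log(E[x_kᵀx_k]/E[x₀ᵀx₀])`. -/
def Ctx.J (C : Ctx n m Ω) (x0 : Ω → Fin n → ℝ) (u : ℕ → Ω → Fin m → ℝ) : ℝ :=
  Filter.limsup
    (fun k : ℕ => (1 / (k : ℝ)) * Real.log (msSq C.Pr (C.traj x0 u k) / msSq C.Pr x0))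
    Filter.atTop

/-- Feedback policies: `u_k = μ_k(x_k)` for Borel-measurable `μ_k`. -/
def Ctx.IsFeedback (C : Ctx n m Ω) (x0 : Ω → Fin n → ℝ) (u : ℕ → Ω → Fin m → ℝ) : Prop :=
  ∃ μ : ℕ → (Fin n → ℝ) → Fin m → ℝ, (∀ k, Measurable (μ k)) ∧
    ∀ k s, u k s = μ k (C.traj x0 u k s)

/-- The closed-loop trajectory under a stationary feedback law `μ`. -/
def Ctx.fbTraj (C : Ctx n m Ω) (x0 : Ω → Fin n → ℝ) (μ : (Fin n → ℝ) → Fin m → ℝ) :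
    ℕ → Ω → Fin n → ℝ
  | 0 => x0
  | k + 1 => fun s =>
      (C.A + C.w k s • C.Abar).mulVec (C.fbTraj x0 μ k s)
      + (C.B + C.w k s • C.Bbar).mulVec (μ (C.fbTraj x0 μ k s))

/-- The stationary policy `u* given by `u*_k = μ(x*_k)` along its own closed-loop
trajectory, for a stationary feedback law `μ`. -/
def Ctx.fbPolicy (C : Ctx n m Ω) (x0 : Ω → Fin n → ℝ) (μ : (Fin n → ℝ) → Fin m → ℝ) :
    ℕ → Ω → Fin m → ℝ :=
  fun k s => μ (C.fbTraj x0 μ k s)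

/-- The linear feedback policy `u*_k = −K·x*_k` along its own trajectory. -/
def Ctx.linFbPolicy (C : Ctx n m Ω) (x0 : Ω → Fin n → ℝ) (K : Matrix (Fin m) (Fin n) ℝ) :
    ℕ → Ω → Fin m → ℝ :=
  C.fbPolicy x0 (fun x => -(K.mulVec x))

/-- `ξ_♯(x) = inf_{v ∈ ℝ^m} ‖(A + Ā·ω)x + (B + B̄·ω)v‖_ms`, realized with `ω = ω₀`. -/
def Ctx.xiSharp (C : Ctx n m Ω) (x : Ω → Fin n → ℝ) : ℝ :=
  ⨅ v : Fin m → ℝ, msNorm C.Pr (fun s =>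
    (C.A + C.w 0 s • C.Abar).mulVec (x s) + (C.B + C.w 0 s • C.Bbar).mulVec v)

/-- Extended-real logarithm: `log t` for `t > 0` and `−∞` for `t ≤ 0`. -/
def elog (t : ℝ) : EReal := if t ≤ 0 then ⊥ else ((Real.log t : ℝ) : EReal)

/-- The cost `J(x₀,u)` interpreted with values in `[−∞,∞]`. -/
def Ctx.Je (C : Ctx n m Ω) (x0 : Ω → Fin n → ℝ) (u : ℕ → Ω → Fin m → ℝ) : EReal :=
  Filter.limsup
    (fun k : ℕ => ((1 / (k : ℝ) : ℝ) : EReal) * elog (msSq C.Pr (C.traj x0 u k) / msSq C.Pr x0))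
    Filter.atTop

end SCS

/-! Averaging over `ω` (mean `0`, variance `σ²`) turns the expected cost into the quadratic form
of the block matrix `[[AᵀPA + σ²ĀᵀPĀ, S(P)], [S(P)ᵀ, R(P)]]` at `(x, v)`. Its Schur complement
identity completes the square: the cost is `xᵀΦ(P)x + (v + K(P)x)ᵀR(P)(v + K(P)x)` with
`R(P) ≻ 0`, so the infimum over `v` is `xᵀΦ(P)x`, attained exactly at `v = −K(P)x`. The Bellman
equation therefore says that the symmetric matrices `Φ(P)` and `e^λ·P` have the same quadratic
form, i.e. coincide. -/

open scoped NNReal MatrixOrder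

theorem ProbabilityTheory.integral_dotProduct_mulVec_add_smul_gaussianReal {ι : Type*} [Fintype ι]
    (P : Matrix ι ι ℝ) (a b : ι → ℝ) (v : ℝ≥0) :
    ∫ s, (a + s • b) ⬝ᵥ P *ᵥ (a + s • b) ∂gaussianReal 0 v
      = a ⬝ᵥ P *ᵥ a + v * (b ⬝ᵥ P *ᵥ b) := by
  have h_expand : ∀ s : ℝ, (a + s • b) ⬝ᵥ P *ᵥ (a + s • b)
      = a ⬝ᵥ P *ᵥ a + ((a ⬝ᵥ P *ᵥ b + b ⬝ᵥ P *ᵥ a) * s + (b ⬝ᵥ P *ᵥ b) * s ^ 2) := fun s => by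
    simp only [mulVec_add, mulVec_smul, dotProduct_add, add_dotProduct, dotProduct_smul,
      smul_dotProduct, smul_eq_mul]
    ring
  have h_int1 : Integrable (fun s : ℝ => s) (gaussianReal 0 v) :=
    (memLp_id_gaussianReal 1).integrable le_rfl
  have h_int2 : Integrable (fun s : ℝ => s ^ 2) (gaussianReal 0 v) :=
    (memLp_id_gaussianReal 2).integrable_sq
  have h_mean : ∫ s, s ∂gaussianReal 0 v = 0 := integral_id_gaussianReal
  have h_second : ∫ s, s ^ 2 ∂gaussianReal 0 v = v := by
    simpa using (variance_of_integral_eq_zero aemeasurable_id h_mean).symm.trans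
      variance_id_gaussianReal
  simp_rw [h_expand]
  have h_lin := h_int1.const_mul (a ⬝ᵥ P *ᵥ b + b ⬝ᵥ P *ᵥ a)
  have h_quad := h_int2.const_mul (b ⬝ᵥ P *ᵥ b)
  have h_sum : Integrable (fun s => (a ⬝ᵥ P *ᵥ b + b ⬝ᵥ P *ᵥ a) * s + (b ⬝ᵥ P *ᵥ b) * s ^ 2)
      (gaussianReal 0 v) := h_lin.add h_quad
  rw [integral_add (integrable_const _) h_sum, integral_add h_lin h_quad,
    integral_const_mul, integral_const_mul, h_mean, h_second]
  simp [mul_comm]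

theorem Matrix.eq_of_forall_dotProduct_mulVec_eq {ι : Type*} [Fintype ι]
    {M N : Matrix ι ι ℝ} (hM : M.IsHermitian) (hN : N.IsHermitian)
    (h : ∀ x, x ⬝ᵥ M *ᵥ x = x ⬝ᵥ N *ᵥ x) : M = N := by
  refine le_antisymm (PosSemidef.of_dotProduct_mulVec_nonneg (hN.sub hM) fun x => ?_)
    (PosSemidef.of_dotProduct_mulVec_nonneg (hM.sub hN) fun x => ?_) <;> simp [sub_mulVec, h]

theorem Matrix.dotProduct_transpose_mul_mul_mulVec {R k l : Type*} [CommSemiring R] [Fintype k]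
    [Fintype l] (M : Matrix l k R) (Q : Matrix l l R) (w : k → R) :
    w ⬝ᵥ (Mᵀ * Q * M) *ᵥ w = M *ᵥ w ⬝ᵥ Q *ᵥ (M *ᵥ w) := by
  rw [← mulVec_mulVec, ← mulVec_mulVec, dotProduct_mulVec w, vecMul_transpose]

theorem Matrix.transpose_fromCols_mul_mul_fromCols {l m₁ m₂ : Type*} [Fintype l]
    (M₁ : Matrix l m₁ ℝ) (N₁ : Matrix l m₂ ℝ) (P : Matrix l l ℝ) (M₂ : Matrix l m₁ ℝ)
    (N₂ : Matrix l m₂ ℝ) :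
    (fromCols M₁ N₁)ᵀ * P * fromCols M₂ N₂
      = fromBlocks (M₁ᵀ * P * M₂) (M₁ᵀ * P * N₂) (N₁ᵀ * P * M₂) (N₁ᵀ * P * N₂) := by
  rw [transpose_fromCols, fromRows_mul, fromRows_mul_fromCols]

namespace SCS

theorem integral_dotProduct_mulVec_add_smul_gauss {ι : Type*} [Fintype ι] (σ : ℝ)
    (P : Matrix ι ι ℝ) (a b : ι → ℝ) :
    ∫ s, (a + s • b) ⬝ᵥ P *ᵥ (a + s • b) ∂gauss σ = a ⬝ᵥ P *ᵥ a + σ ^ 2 * (b ⬝ᵥ P *ᵥ b) :=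
  integral_dotProduct_mulVec_add_smul_gaussianReal P a b _

section

variable {n m : ℕ} {σ : ℝ} {A Abar : Matrix (Fin n) (Fin n) ℝ} {B Bbar : Matrix (Fin n) (Fin m) ℝ}
  {P : Matrix (Fin n) (Fin n) ℝ}

theorem qform_eq_dotProduct_fromBlocks (hP : P.IsHermitian) (x : Fin n → ℝ) (v : Fin m → ℝ) :
    qform σ A Abar B Bbar P x v = Sum.elim x v ⬝ᵥ
      fromBlocks (Aᵀ * P * A + σ ^ 2 • (Abarᵀ * P * Abar)) (Sop σ A Abar B Bbar P)
        (Sop σ A Abar B Bbar P)ᴴ (Rop σ B Bbar P) *ᵥ Sum.elim x v := by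
  set z := Sum.elim x v
  have h_state : ∀ s : ℝ, (A + s • Abar) *ᵥ x + (B + s • Bbar) *ᵥ v
      = fromCols A B *ᵥ z + s • (fromCols Abar Bbar *ᵥ z) := fun s => by
    simp only [z, fromCols_mulVec_sumElim, add_mulVec, smul_mulVec, smul_add]
    abel
  have h_block : (Sop σ A Abar B Bbar P)ᴴ = Bᵀ * P * A + σ ^ 2 • (Bbarᵀ * P * Abar) := by
    simp [Sop, conjTranspose_eq_transpose_of_trivial, transpose_add, transpose_mul,
      (isHermitian_iff_isSymm.mp hP).eq, Matrix.mul_assoc]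
  simp_rw [qform, h_state]
  rw [integral_dotProduct_mulVec_add_smul_gauss, ← dotProduct_transpose_mul_mul_mulVec,
    ← dotProduct_transpose_mul_mul_mulVec, ← smul_eq_mul, ← dotProduct_smul, ← smul_mulVec,
    ← dotProduct_add, ← add_mulVec, transpose_fromCols_mul_mul_fromCols,
    transpose_fromCols_mul_mul_fromCols, fromBlocks_smul, fromBlocks_add, h_block]
  rfl

theorem isHermitian_Rop (hP : P.IsHermitian) : (Rop σ B Bbar P).IsHermitian := by
  simpa [Rop, conjTranspose_eq_transpose_of_trivial] using
    (isHermitian_conjTranspose_mul_mul B hP).add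
      ((isHermitian_conjTranspose_mul_mul Bbar hP).smul (IsSelfAdjoint.all (σ ^ 2)))

theorem isHermitian_Phi (hP : P.IsHermitian) : (Phi σ A Abar B Bbar P).IsHermitian := by
  have hQ : (Aᵀ * P * A + σ ^ 2 • (Abarᵀ * P * Abar)).IsHermitian := by
    simpa [conjTranspose_eq_transpose_of_trivial] using
      (isHermitian_conjTranspose_mul_mul A hP).add
        ((isHermitian_conjTranspose_mul_mul Abar hP).smul (IsSelfAdjoint.all (σ ^ 2)))
  simpa [Phi, conjTranspose_eq_transpose_of_trivial, Matrix.mul_assoc] using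
    hQ.sub (isHermitian_conjTranspose_mul_mul (Sop σ A Abar B Bbar P)ᴴ (isHermitian_Rop hP).inv)

theorem qform_eq_Phi_add (hP : P.IsHermitian) (hR : IsUnit (Rop σ B Bbar P).det)
    (x : Fin n → ℝ) (v : Fin m → ℝ) :
    qform σ A Abar B Bbar P x v = x ⬝ᵥ Phi σ A Abar B Bbar P *ᵥ x
      + (v + Kgain σ A Abar B Bbar P *ᵥ x) ⬝ᵥ
          Rop σ B Bbar P *ᵥ (v + Kgain σ A Abar B Bbar P *ᵥ x) := by
  have := hR.invertible
  have := invertibleOfDetInvertible (Rop σ B Bbar P)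
  rw [qform_eq_dotProduct_fromBlocks hP, dotProduct_mulVec]
  nth_rw 1 [← star_trivial (Sum.elim x v)]
  rw [schur_complement_eq₂₂ _ _ _ _ (isHermitian_Rop hP)]
  simp only [star_trivial, ← dotProduct_mulVec, conjTranspose_eq_transpose_of_trivial]
  rw [add_comm, add_comm v, Phi, Kgain]

theorem posDef_Rop (hP : P.PosDef) (hR₀ : (Bᵀ * B + σ ^ 2 • (Bbarᵀ * Bbar)).PosDef) :
    (Rop σ B Bbar P).PosDef := by
  refine PosDef.of_dotProduct_mulVec_pos (isHermitian_Rop hP.isHermitian) fun w hw => ?_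
  have h_gram : ∀ M : Matrix (Fin n) (Fin m) ℝ, w ⬝ᵥ (Mᵀ * M) *ᵥ w = M *ᵥ w ⬝ᵥ M *ᵥ w :=
    fun M => by simpa using dotProduct_transpose_mul_mul_mulVec M 1 w
  have hP_nonneg : ∀ y, 0 ≤ y ⬝ᵥ P *ᵥ y := fun y => by
    simpa using hP.posSemidef.dotProduct_mulVec_nonneg y
  have hP_eq_zero : ∀ y, y ⬝ᵥ P *ᵥ y = 0 → y = 0 := fun y hy => by
    by_contra hne
    simpa [hy] using hP.dotProduct_mulVec_pos hne
  have hR₀_pos := hR₀.dotProduct_mulVec_pos hw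
  simp only [star_trivial, add_mulVec, smul_mulVec, dotProduct_add, dotProduct_smul, smul_eq_mul,
    h_gram] at hR₀_pos
  rw [star_trivial, Rop, add_mulVec, smul_mulVec, dotProduct_add, dotProduct_smul, smul_eq_mul,
    dotProduct_transpose_mul_mul_mulVec, dotProduct_transpose_mul_mul_mulVec]
  -- `wᵀR(P)w ≤ 0` forces `Bw = 0` and `σ²·(B̄w)ᵀP(B̄w) = 0`, hence `wᵀR₀w = 0`.
  by_contra h_nonpos
  have hB := hP_nonneg (B *ᵥ w)
  have hBbar := hP_nonneg (Bbar *ᵥ w)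
  have hσ_sq := sq_nonneg σ
  have hB_zero : B *ᵥ w = 0 := hP_eq_zero _ (by nlinarith)
  rw [hB_zero, dotProduct_zero, zero_add] at hR₀_pos
  rcases mul_eq_zero.mp (show σ ^ 2 * (Bbar *ᵥ w ⬝ᵥ P *ᵥ (Bbar *ᵥ w)) = 0 by nlinarith) with
    hσ_zero | hBbar_zero
  · simp [hσ_zero] at hR₀_pos
  · simp [hP_eq_zero _ hBbar_zero] at hR₀_pos

theorem qform_neg_Kgain (hP : P.IsHermitian) (hR : IsUnit (Rop σ B Bbar P).det)
    (x : Fin n → ℝ) :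
    qform σ A Abar B Bbar P x (-(Kgain σ A Abar B Bbar P *ᵥ x))
      = x ⬝ᵥ Phi σ A Abar B Bbar P *ᵥ x := by
  simp [qform_eq_Phi_add hP hR]

theorem isLeast_qform (hP : P.IsHermitian) (hR : (Rop σ B Bbar P).PosDef) (x : Fin n → ℝ) :
    IsLeast (Set.range (qform σ A Abar B Bbar P x)) (x ⬝ᵥ Phi σ A Abar B Bbar P *ᵥ x) := by
  have hR_det := (isUnit_iff_isUnit_det _).mp hR.isUnit
  refine ⟨⟨_, qform_neg_Kgain hP hR_det x⟩, ?_⟩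
  rintro _ ⟨v, rfl⟩
  rw [qform_eq_Phi_add hP hR_det]
  simpa using hR.posSemidef.dotProduct_mulVec_nonneg (v + Kgain σ A Abar B Bbar P *ᵥ x)

theorem eq_neg_Kgain_of_qform_eq (hP : P.IsHermitian) (hR : (Rop σ B Bbar P).PosDef)
    {x : Fin n → ℝ} {v : Fin m → ℝ}
    (h : qform σ A Abar B Bbar P x v = x ⬝ᵥ Phi σ A Abar B Bbar P *ᵥ x) :
    v = -(Kgain σ A Abar B Bbar P *ᵥ x) := by
  rw [qform_eq_Phi_add hP ((isUnit_iff_isUnit_det _).mp hR.isUnit), add_eq_left] at h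
  by_contra hne
  simpa [h] using hR.dotProduct_mulVec_pos (sub_ne_zero.mpr hne)

end

theorem bellman_iff_eigen_general {n m : ℕ}
    (σ : ℝ)
    (A Abar : Matrix (Fin n) (Fin n) ℝ) (B Bbar : Matrix (Fin n) (Fin m) ℝ)
    (hR0 : (Bᵀ * B + σ ^ 2 • (Bbarᵀ * Bbar)).PosDef)
    (lam : ℝ) (P : Matrix (Fin n) (Fin n) ℝ) (hP : P.PosDef) :
    ((∀ x : Fin n → ℝ,
        Real.exp lam * (x ⬝ᵥ P.mulVec x) = ⨅ v : Fin m → ℝ, qform σ A Abar B Bbar P x v)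
      ↔ Phi σ A Abar B Bbar P = Real.exp lam • P) ∧
    ((∀ x : Fin n → ℝ,
        Real.exp lam * (x ⬝ᵥ P.mulVec x) = ⨅ v : Fin m → ℝ, qform σ A Abar B Bbar P x v) →
      ∀ x : Fin n → ℝ,
        IsLeast (Set.range (qform σ A Abar B Bbar P x))
          (qform σ A Abar B Bbar P x (-(Kgain σ A Abar B Bbar P).mulVec x)) ∧
        ∀ v : Fin m → ℝ,
          qform σ A Abar B Bbar P x v
              = qform σ A Abar B Bbar P x (-(Kgain σ A Abar B Bbar P).mulVec x) →
            v = -(Kgain σ A Abar B Bbar P).mulVec x) := by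
  have hP_herm := hP.isHermitian
  have hR := posDef_Rop hP hR0
  have h_inf : ∀ x, ⨅ v, qform σ A Abar B Bbar P x v = x ⬝ᵥ Phi σ A Abar B Bbar P *ᵥ x :=
    fun x => (isLeast_qform hP_herm hR x).csInf_eq
  have h_min : ∀ x, qform σ A Abar B Bbar P x (-(Kgain σ A Abar B Bbar P *ᵥ x))
      = x ⬝ᵥ Phi σ A Abar B Bbar P *ᵥ x :=
    qform_neg_Kgain hP_herm ((isUnit_iff_isUnit_det _).mp hR.isUnit)
  refine ⟨⟨fun h_bellman => ?_, fun h_eigen x => ?_⟩, fun _ x => ⟨?_, fun v hv => ?_⟩⟩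
  · refine Matrix.eq_of_forall_dotProduct_mulVec_eq (isHermitian_Phi hP_herm)
      (hP_herm.smul (IsSelfAdjoint.all _)) fun x => ?_
    rw [← h_inf, ← h_bellman, smul_mulVec, dotProduct_smul, smul_eq_mul]
  · rw [h_inf, h_eigen, smul_mulVec, dotProduct_smul, smul_eq_mul]
  · rw [h_min]
    exact isLeast_qform hP_herm hR x
  · exact eq_neg_Kgain_of_qform_eq hP_herm hR (hv.trans (h_min x))

/-- For `P ≻ 0`, the Bellman-type equation is equivalent to the
nonlinear matrix eigenvalue relation `Φ(P) = e^λ·P`; moreover when these hold,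
for each `x` the infimum is attained uniquely at `v = −K(P)·x`. -/
theorem bellman_iff_eigen {n m : ℕ} (hn : 0 < n) (hm : 0 < m)
    (σ : ℝ) (hσ : 0 < σ)
    (A Abar : Matrix (Fin n) (Fin n) ℝ) (B Bbar : Matrix (Fin n) (Fin m) ℝ)
    (hR0 : (Bᵀ * B + σ ^ 2 • (Bbarᵀ * Bbar)).PosDef)
    (lam : ℝ) (P : Matrix (Fin n) (Fin n) ℝ) (hP : P.PosDef) :
    ((∀ x : Fin n → ℝ,
        Real.exp lam * (x ⬝ᵥ P.mulVec x) = ⨅ v : Fin m → ℝ, qform σ A Abar B Bbar P x v)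
      ↔ Phi σ A Abar B Bbar P = Real.exp lam • P) ∧
    ((∀ x : Fin n → ℝ,
        Real.exp lam * (x ⬝ᵥ P.mulVec x) = ⨅ v : Fin m → ℝ, qform σ A Abar B Bbar P x v) →
      ∀ x : Fin n → ℝ,
        IsLeast (Set.range (qform σ A Abar B Bbar P x))
          (qform σ A Abar B Bbar P x (-(Kgain σ A Abar B Bbar P).mulVec x)) ∧
        ∀ v : Fin m → ℝ,
          qform σ A Abar B Bbar P x v
              = qform σ A Abar B Bbar P x (-(Kgain σ A Abar B Bbar P).mulVec x) →
            v = -(Kgain σ A Abar B Bbar P).mulVec x) :=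
  bellman_iff_eigen_general σ A Abar B Bbar hR0 lam P hP

end SCS
end
end

section
/- Assume R₀ := BᵀB + σ²·B̄ᵀB̄ is positive definite. Fix τ ∈ (0,1) and let S_{δ_τ} := {X symmetric n×n : X ⪰ δ_τ·I and Tr X = 1}. Define Λ(τ) := (1−τ)·L_Φ(δ_τ)/τ + (1−τ)·((1−τ)·C_Φ(δ_τ) + τ/n)·n·L_Φ(δ_τ)/τ². Then: (a) for all P, Q ∈ S_{δ_τ}, ‖Φ̂_τ(P) − Φ̂_τ(Q)‖ ≤ Λ(τ)·‖P − Q‖; (b) if Λ(τ) < 1, then Φ̂_τ has a unique fixed point P^(τ) in S_{δ_τ}, and for every starting point P₀ ∈ S_{δ_τ} the iterates P_{k+1} := Φ̂_τ(P_k) satisfy ‖P_k − P^(τ)‖ ≤ Λ(τ)^k·‖P₀ − P^(τ)‖ for all k ∈ ℕ. -/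
open Matrix MeasureTheory ProbabilityTheory
open scoped ENNReal Classical

noncomputable section

open scoped Matrix.Norms.L2Operator

section Euclidean
variable {ι : Type*} [Fintype ι]

lemma dotProduct_self_eq_norm_sq (x : ι → ℝ) : x ⬝ᵥ x = ‖WithLp.toLp 2 x‖ ^ 2 := by
  rw [← real_inner_self_eq_norm_sq, EuclideanSpace.inner_eq_star_dotProduct]
  simp

lemma dotProduct_self_nonneg (x : ι → ℝ) : 0 ≤ x ⬝ᵥ x := by
  rw [dotProduct_self_eq_norm_sq]; positivity

lemma dotProduct_self_eq_one_iff {x : ι → ℝ} : x ⬝ᵥ x = 1 ↔ ‖WithLp.toLp 2 x‖ = 1 := by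
  rw [dotProduct_self_eq_norm_sq, pow_eq_one_iff_of_nonneg (norm_nonneg _) two_ne_zero]

lemma abs_dotProduct_le (x y : ι → ℝ) : |x ⬝ᵥ y| ≤ ‖WithLp.toLp 2 x‖ * ‖WithLp.toLp 2 y‖ := by
  have := abs_real_inner_le_norm (WithLp.toLp 2 x) (WithLp.toLp 2 y)
  rwa [EuclideanSpace.inner_eq_star_dotProduct, star_trivial, dotProduct_comm] at this

lemma Matrix.le_norm_mulVec_of_le_dotProduct {M : Matrix ι ι ℝ} {c : ℝ}
    (h : ∀ x, c * (x ⬝ᵥ x) ≤ x ⬝ᵥ M *ᵥ x) (x : ι → ℝ) :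
    c * ‖WithLp.toLp 2 x‖ ≤ ‖WithLp.toLp 2 (M *ᵥ x)‖ := by
  rcases (norm_nonneg (WithLp.toLp 2 x)).eq_or_lt with h0 | h0
  · rw [← h0, mul_zero]; exact norm_nonneg _
  refine le_of_mul_le_mul_left ?_ h0
  calc ‖WithLp.toLp 2 x‖ * (c * ‖WithLp.toLp 2 x‖) = c * (x ⬝ᵥ x) := by
        rw [dotProduct_self_eq_norm_sq]; ring
    _ ≤ |x ⬝ᵥ M *ᵥ x| := (h x).trans (le_abs_self _)
    _ ≤ _ := abs_dotProduct_le _ _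

end Euclidean

namespace Matrix
variable {ι κ ν μ : Type*} [Fintype ι] [DecidableEq ι] [Fintype κ] [DecidableEq κ]
  [Fintype ν] [DecidableEq ν] [Fintype μ]

lemma abs_dotProduct_mulVec_le (M : Matrix ι ι ℝ) (x : ι → ℝ) :
    |x ⬝ᵥ M *ᵥ x| ≤ ‖M‖ * (x ⬝ᵥ x) :=
  calc |x ⬝ᵥ M *ᵥ x| ≤ ‖WithLp.toLp 2 x‖ * (‖M‖ * ‖WithLp.toLp 2 x‖) :=
        (abs_dotProduct_le _ _).trans (by gcongr; exact M.l2_opNorm_mulVec (WithLp.toLp 2 x))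
    _ = ‖M‖ * (x ⬝ᵥ x) := by rw [dotProduct_self_eq_norm_sq]; ring

lemma l2_opNorm_transpose (M : Matrix μ ι ℝ) [DecidableEq μ] : ‖Mᵀ‖ = ‖M‖ := by
  rw [← conjTranspose_eq_transpose_of_trivial, l2_opNorm_conjTranspose]

lemma l2_opNorm_mul_mul_le (A : Matrix μ ι ℝ) (B : Matrix ι κ ℝ) (C : Matrix κ ν ℝ) :
    ‖A * B * C‖ ≤ ‖A‖ * ‖B‖ * ‖C‖ :=
  (l2_opNorm_mul _ _).trans (by gcongr; exact l2_opNorm_mul _ _)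

lemma l2_opNorm_one_le : ‖(1 : Matrix ι ι ℝ)‖ ≤ 1 := by
  rw [cstar_norm_def, map_one]
  exact ContinuousLinearMap.norm_id_le

lemma abs_trace_le (M : Matrix ι ι ℝ) : |M.trace| ≤ Fintype.card ι * ‖M‖ := by
  have hdiag : ∀ i, |M i i| ≤ ‖M‖ := fun i => by
    simpa [mulVec_single, dotProduct_single, Pi.single_apply] using
      M.abs_dotProduct_mulVec_le (Pi.single i 1)
  calc |M.trace| ≤ ∑ i, |M i i| := Finset.abs_sum_le_sum_abs _ _
    _ ≤ ∑ _i : ι, ‖M‖ := Finset.sum_le_sum fun i _ => hdiag i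
    _ = Fintype.card ι * ‖M‖ := by simp

lemma PosSemidef.l2_opNorm_le_trace {P : Matrix ι ι ℝ} (hP : P.PosSemidef) : ‖P‖ ≤ P.trace := by
  conv_lhs => rw [← cfc_id' ℝ P hP.1.isSelfAdjoint]
  refine norm_cfc_le hP.trace_nonneg fun x hx => ?_
  obtain ⟨i, rfl⟩ := hP.1.spectrum_real_eq_range_eigenvalues ▸ hx
  rw [hP.1.trace_eq_sum_eigenvalues, Real.norm_of_nonneg (hP.eigenvalues_nonneg i)]
  exact Finset.single_le_sum (fun j _ => hP.eigenvalues_nonneg j) (Finset.mem_univ i)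

open scoped MatrixOrder in
lemma PosSemidef.trace_mul_nonneg {P M : Matrix ι ι ℝ} (hP : P.PosSemidef) (hM : M.PosSemidef) :
    0 ≤ (P * M).trace := by
  set C := CFC.sqrt P
  have hC : C.PosSemidef := nonneg_iff_posSemidef.mp (CFC.sqrt_nonneg P)
  have hCC : C * C = P := CFC.sqrt_mul_sqrt_self P (nonneg_iff_posSemidef.mpr hP)
  rw [← hCC, Matrix.mul_assoc, trace_mul_comm, Matrix.mul_assoc]
  have := (hM.conjTranspose_mul_mul_same C).trace_nonneg
  rwa [hC.1.eq, Matrix.mul_assoc] at this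

section Coercive
variable {M : Matrix ι ι ℝ} {c : ℝ}

lemma isUnit_det_of_le_dotProduct (hc : 0 < c) (h : ∀ x, c * (x ⬝ᵥ x) ≤ x ⬝ᵥ M *ᵥ x) :
    IsUnit M.det := by
  refine (isUnit_iff_isUnit_det M).mp <| mulVec_injective_iff_isUnit.mp fun x y hxy => ?_
  have := le_norm_mulVec_of_le_dotProduct h (x - y)
  rw [mulVec_sub, hxy, sub_self, WithLp.toLp_zero, norm_zero] at this
  simpa [sub_eq_zero] using (mul_nonpos_iff_pos_imp_nonpos.mp this).1 hc

lemma l2_opNorm_inv_le_of_le_dotProduct (hc : 0 < c) (h : ∀ x, c * (x ⬝ᵥ x) ≤ x ⬝ᵥ M *ᵥ x) :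
    ‖M⁻¹‖ ≤ c⁻¹ := by
  rw [cstar_norm_def]
  refine ContinuousLinearMap.opNorm_le_bound _ (inv_nonneg.mpr hc.le) fun y => ?_
  have key := le_norm_mulVec_of_le_dotProduct h (M⁻¹ *ᵥ y.ofLp)
  rw [mulVec_mulVec, mul_nonsing_inv _ (isUnit_det_of_le_dotProduct hc h), one_mulVec] at key
  rw [inv_mul_eq_div, le_div_iff₀' hc]
  exact (by simpa using key : c * ‖WithLp.toLp 2 (M⁻¹ *ᵥ y.ofLp)‖ ≤ ‖y‖)

end Coercive

lemma l2_opNorm_trace_inv_smul_sub_le {G₁ G₂ : Matrix ι ι ℝ} {t : ℝ} (ht : 0 < t)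
    (h₁ : t ≤ G₁.trace) (h₂ : t ≤ G₂.trace) :
    ‖G₁.trace⁻¹ • G₁ - G₂.trace⁻¹ • G₂‖
      ≤ (t⁻¹ + Fintype.card ι * ‖G₂‖ / t ^ 2) * ‖G₁ - G₂‖ := by
  set s₁ := G₁.trace
  set s₂ := G₂.trace
  have hs₁ : 0 < s₁ := ht.trans_le h₁
  have hs₂ : 0 < s₂ := ht.trans_le h₂
  have hsplit : s₁⁻¹ • G₁ - s₂⁻¹ • G₂ = s₁⁻¹ • (G₁ - G₂) + ((s₂ - s₁) / (s₁ * s₂)) • G₂ := by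
    match_scalars <;> field_simp; ring
  have htr : |s₂ - s₁| ≤ Fintype.card ι * ‖G₁ - G₂‖ := by
    rw [abs_sub_comm, ← trace_sub]; exact abs_trace_le _
  calc ‖s₁⁻¹ • G₁ - s₂⁻¹ • G₂‖
      ≤ s₁⁻¹ * ‖G₁ - G₂‖ + |s₂ - s₁| / (s₁ * s₂) * ‖G₂‖ := by
        rw [hsplit]
        refine (norm_add_le _ _).trans_eq ?_
        rw [norm_smul, norm_smul, Real.norm_of_nonneg (inv_nonneg.mpr hs₁.le), Real.norm_eq_abs,
          abs_div, abs_of_pos (mul_pos hs₁ hs₂)]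
    _ ≤ t⁻¹ * ‖G₁ - G₂‖ + Fintype.card ι * ‖G₁ - G₂‖ / (t * t) * ‖G₂‖ := by gcongr
    _ = (t⁻¹ + Fintype.card ι * ‖G₂‖ / t ^ 2) * ‖G₁ - G₂‖ := by ring

lemma l2_opNorm_mul_inv_mul_transpose_sub_le {S₁ S₂ : Matrix ι κ ℝ} {R₁ R₂ : Matrix κ κ ℝ}
    (hR₁ : IsUnit R₁.det) (hR₂ : IsUnit R₂.det) {s c : ℝ} (hS₁ : ‖S₁‖ ≤ s) (hS₂ : ‖S₂‖ ≤ s)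
    (hc₁ : ‖R₁⁻¹‖ ≤ c) (hc₂ : ‖R₂⁻¹‖ ≤ c) :
    ‖S₁ * R₁⁻¹ * S₁ᵀ - S₂ * R₂⁻¹ * S₂ᵀ‖
      ≤ 2 * s * c * ‖S₁ - S₂‖ + s ^ 2 * c ^ 2 * ‖R₁ - R₂‖ := by
  have hsplit : S₁ * R₁⁻¹ * S₁ᵀ - S₂ * R₂⁻¹ * S₂ᵀ = (S₁ - S₂) * R₁⁻¹ * S₁ᵀ
      + S₂ * R₂⁻¹ * (S₁ - S₂)ᵀ - S₂ * R₂⁻¹ * ((R₁ - R₂) * R₁⁻¹ * S₁ᵀ) := by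
    have e₁ : R₁ * (R₁⁻¹ * S₁ᵀ) = S₁ᵀ := by
      rw [← Matrix.mul_assoc, mul_nonsing_inv _ hR₁, Matrix.one_mul]
    have e₂ : R₂⁻¹ * (R₂ * (R₁⁻¹ * S₁ᵀ)) = R₁⁻¹ * S₁ᵀ := by
      rw [← Matrix.mul_assoc, nonsing_inv_mul _ hR₂, Matrix.one_mul]
    simp only [Matrix.sub_mul, Matrix.mul_sub, transpose_sub, Matrix.mul_assoc, e₁, e₂]
    abel
  have hs : 0 ≤ s := (norm_nonneg _).trans hS₁
  have hc : 0 ≤ c := (norm_nonneg _).trans hc₁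
  have t₁ := l2_opNorm_mul_mul_le (S₁ - S₂) R₁⁻¹ S₁ᵀ
  have t₂ := l2_opNorm_mul_mul_le S₂ R₂⁻¹ (S₁ - S₂)ᵀ
  have t₃ := l2_opNorm_mul_mul_le S₂ R₂⁻¹ ((R₁ - R₂) * R₁⁻¹ * S₁ᵀ)
  have t₄ := l2_opNorm_mul_mul_le (R₁ - R₂) R₁⁻¹ S₁ᵀ
  rw [l2_opNorm_transpose] at t₁ t₂ t₄
  rw [hsplit]
  calc _ ≤ ‖S₁ - S₂‖ * ‖R₁⁻¹‖ * ‖S₁‖ + ‖S₂‖ * ‖R₂⁻¹‖ * ‖S₁ - S₂‖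
        + ‖S₂‖ * ‖R₂⁻¹‖ * (‖R₁ - R₂‖ * ‖R₁⁻¹‖ * ‖S₁‖) :=
        (norm_sub_le _ _).trans <| add_le_add ((norm_add_le _ _).trans (add_le_add t₁ t₂))
          (t₃.trans (by gcongr))
    _ ≤ ‖S₁ - S₂‖ * c * s + s * c * ‖S₁ - S₂‖ + s * c * (‖R₁ - R₂‖ * c * s) := by gcongr
    _ = _ := by ring

end Matrix

theorem exists_unique_fixedPoint_of_dist_le {α : Type*} [MetricSpace α] [CompleteSpace α]
    {s : Set α} (hs : IsClosed s) (hne : s.Nonempty) {F : α → α} (hF : Set.MapsTo F s s)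
    {K : ℝ} (hK0 : 0 ≤ K) (hK : K < 1) (hlip : ∀ x ∈ s, ∀ y ∈ s, dist (F x) (F y) ≤ K * dist x y) :
    ∃ p ∈ s, F p = p ∧ (∀ q ∈ s, F q = q → q = p) ∧
      ∀ x : ℕ → α, x 0 ∈ s → (∀ k, x (k + 1) = F (x k)) →
        ∀ k, dist (x k) p ≤ K ^ k * dist (x 0) p := by
  have : CompleteSpace s := hs.completeSpace_coe
  have : Nonempty s := hne.to_subtype
  have hcontr : ContractingWith K.toNNReal (hF.restrict F s s) :=
    ⟨by simpa using hK, LipschitzWith.of_dist_le_mul fun x y => by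
      simpa [Real.coe_toNNReal _ hK0, Subtype.dist_eq] using hlip x x.2 y y.2⟩
  set p := ContractingWith.fixedPoint _ hcontr
  have hp : F p = p := congrArg Subtype.val (ContractingWith.fixedPoint_isFixedPt hcontr)
  refine ⟨p, p.2, hp, fun q hq hFq => ?_, fun x hx0 hx k => ?_⟩
  · have := hlip q hq p p.2
    rw [hFq, hp] at this
    exact dist_le_zero.mp (by nlinarith [dist_nonneg (x := q) (y := (p : α))])
  · have hxs : ∀ k, x k ∈ s := fun k => by
      induction k with
      | zero => exact hx0
      | succ k ih => rw [hx k]; exact hF ih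
    induction k with
    | zero => simp
    | succ k ih =>
      calc dist (x (k + 1)) p = dist (F (x k)) (F p) := by rw [hx k, hp]
        _ ≤ K * dist (x k) p := hlip _ (hxs k) _ p.2
        _ ≤ K * (K ^ k * dist (x 0) p) := by gcongr
        _ = K ^ (k + 1) * dist (x 0) p := by ring

namespace SCS

section Rayleigh
variable {p q : ℕ}

lemma exists_unit_dotProduct_mulVec_eq (M : Matrix (Fin p) (Fin p) ℝ) {x : Fin p → ℝ}
    (hx : x ≠ 0) : ∃ u : Fin p → ℝ, u ⬝ᵥ u = 1 ∧ x ⬝ᵥ M *ᵥ x = (x ⬝ᵥ x) * (u ⬝ᵥ M *ᵥ u) := by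
  have hpos : 0 < x ⬝ᵥ x :=
    lt_of_le_of_ne (dotProduct_self_nonneg x) (Ne.symm (mt dotProduct_self_eq_zero.mp hx))
  set t := Real.sqrt (x ⬝ᵥ x)
  have ht : t ^ 2 = x ⬝ᵥ x := Real.sq_sqrt hpos.le
  have ht0 : t ≠ 0 := (Real.sqrt_pos.mpr hpos).ne'
  refine ⟨t⁻¹ • x, ?_, ?_⟩
  · simp only [smul_dotProduct, dotProduct_smul, smul_eq_mul, ← ht]
    field_simp
  · simp only [Matrix.mulVec_smul, smul_dotProduct, dotProduct_smul, smul_eq_mul, ← ht]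
    field_simp

lemma bddAbove_rayleigh (M : Matrix (Fin p) (Fin p) ℝ) :
    BddAbove (Set.range fun x : {x : Fin p → ℝ // x ⬝ᵥ x = 1} => x.1 ⬝ᵥ M *ᵥ x.1) :=
  ⟨‖M‖, by rintro _ ⟨x, rfl⟩; simpa [x.2] using (abs_le.mp (M.abs_dotProduct_mulVec_le x.1)).2⟩

lemma bddBelow_rayleigh (M : Matrix (Fin p) (Fin p) ℝ) :
    BddBelow (Set.range fun x : {x : Fin p → ℝ // x ⬝ᵥ x = 1} => x.1 ⬝ᵥ M *ᵥ x.1) :=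
  ⟨-‖M‖, by rintro _ ⟨x, rfl⟩; simpa [x.2] using (abs_le.mp (M.abs_dotProduct_mulVec_le x.1)).1⟩

lemma dotProduct_mulVec_le_lamMax (M : Matrix (Fin p) (Fin p) ℝ) (x : Fin p → ℝ) :
    x ⬝ᵥ M *ᵥ x ≤ lamMax M * (x ⬝ᵥ x) := by
  rcases eq_or_ne x 0 with rfl | hx
  · simp
  obtain ⟨u, hu, hxu⟩ := exists_unit_dotProduct_mulVec_eq M hx
  rw [hxu, mul_comm (lamMax M)]
  exact mul_le_mul_of_nonneg_left (le_ciSup (bddAbove_rayleigh M) ⟨u, hu⟩)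
    (dotProduct_self_nonneg x)

lemma lamMin_mul_le_dotProduct_mulVec (M : Matrix (Fin p) (Fin p) ℝ) (x : Fin p → ℝ) :
    lamMin M * (x ⬝ᵥ x) ≤ x ⬝ᵥ M *ᵥ x := by
  rcases eq_or_ne x 0 with rfl | hx
  · simp
  obtain ⟨u, hu, hxu⟩ := exists_unit_dotProduct_mulVec_eq M hx
  rw [hxu, mul_comm (lamMin M)]
  exact mul_le_mul_of_nonneg_left (ciInf_le (bddBelow_rayleigh M) ⟨u, hu⟩)
    (dotProduct_self_nonneg x)

lemma lamMax_nonneg {M : Matrix (Fin p) (Fin p) ℝ} (hM : M.PosSemidef) : 0 ≤ lamMax M :=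
  Real.iSup_nonneg fun x => by simpa using hM.dotProduct_mulVec_nonneg x.1

lemma lamMin_pos (hp : 0 < p) {M : Matrix (Fin p) (Fin p) ℝ} (hM : M.PosDef) : 0 < lamMin M := by
  have : Nonempty (Fin p) := ⟨⟨0, hp⟩⟩
  obtain ⟨y₀, hy₀, hmin⟩ := (isCompact_sphere (0 : EuclideanSpace ℝ (Fin p)) 1).exists_isMinOn
    (NormedSpace.sphere_nonempty.mpr zero_le_one)
    (f := fun y => y.ofLp ⬝ᵥ M *ᵥ y.ofLp) (by fun_prop)
  have hy₀1 : y₀.ofLp ⬝ᵥ y₀.ofLp = 1 := dotProduct_self_eq_one_iff.mpr (by simpa using hy₀)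
  have : Nonempty {x : Fin p → ℝ // x ⬝ᵥ x = 1} := ⟨⟨_, hy₀1⟩⟩
  have hpos : 0 < y₀.ofLp ⬝ᵥ M *ᵥ y₀.ofLp := by
    simpa using hM.dotProduct_mulVec_pos (x := y₀.ofLp) (by rintro h; simp [h] at hy₀1)
  exact hpos.trans_le <| le_ciInf fun x =>
    hmin (by simpa using dotProduct_self_eq_one_iff.mp x.2)

lemma posSemidef_lamMax_smul_one_sub {N : Matrix (Fin p) (Fin p) ℝ} (hN : N.IsSymm) :
    (lamMax N • (1 : Matrix (Fin p) (Fin p) ℝ) - N).PosSemidef := by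
  refine .of_dotProduct_mulVec_nonneg (by simp [Matrix.IsSymm, hN.eq]) fun x => ?_
  simpa [Matrix.sub_mulVec, Matrix.smul_mulVec] using dotProduct_mulVec_le_lamMax N x

lemma trace_mul_le_lamMax_mul_trace {P N : Matrix (Fin p) (Fin p) ℝ} (hP : P.PosSemidef)
    (hN : N.IsSymm) : (P * N).trace ≤ lamMax N * P.trace := by
  have := hP.trace_mul_nonneg (posSemidef_lamMax_smul_one_sub hN)
  rw [Matrix.mul_sub, Matrix.trace_sub, Matrix.mul_smul, Matrix.mul_one, Matrix.trace_smul,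
    smul_eq_mul] at this
  linarith

lemma lamMax_transpose_mul_self (M : Matrix (Fin p) (Fin q) ℝ) : lamMax (Mᵀ * M) = ‖M‖ ^ 2 := by
  have hquad : ∀ x, x ⬝ᵥ (Mᵀ * M) *ᵥ x = ‖WithLp.toLp 2 (M *ᵥ x)‖ ^ 2 := fun x => by
    rw [← Matrix.mulVec_mulVec, Matrix.dotProduct_mulVec, Matrix.vecMul_transpose,
      dotProduct_self_eq_norm_sq]
  have hnonneg : 0 ≤ lamMax (Mᵀ * M) := Real.iSup_nonneg fun x => by rw [hquad]; positivity
  refine le_antisymm (Real.iSup_le (fun x => ?_) (by positivity)) ?_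
  · rw [hquad]
    simpa [dotProduct_self_eq_one_iff.mp x.2] using
      pow_le_pow_left₀ (norm_nonneg _) (M.l2_opNorm_mulVec (WithLp.toLp 2 x.1)) 2
  · suffices ‖M‖ ≤ Real.sqrt (lamMax (Mᵀ * M)) by
      simpa [Real.sq_sqrt hnonneg] using pow_le_pow_left₀ (norm_nonneg _) this 2
    rw [Matrix.l2_opNorm_def]
    refine ContinuousLinearMap.opNorm_le_bound _ (Real.sqrt_nonneg _) fun y => ?_
    refine le_of_pow_le_pow_left₀ two_ne_zero (by positivity) ?_
    rw [mul_pow, Real.sq_sqrt hnonneg]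
    simpa [hquad, dotProduct_self_eq_norm_sq, Matrix.toLpLin_apply] using
      dotProduct_mulVec_le_lamMax (Mᵀ * M) y.ofLp

lemma specNorm_eq_l2_opNorm (M : Matrix (Fin p) (Fin q) ℝ) : specNorm M = ‖M‖ := by
  rw [specNorm, lamMax_transpose_mul_self, Real.sqrt_sq (norm_nonneg _)]

end Rayleigh

/-- `E[(X + ω X̄)ᵀ P (Y + ω Ȳ)]` for `ω ~ N(0, σ²)`; `R`, `S` and the leading term of `Φ` are of
this form. -/
def meanForm {ι κ ν : Type*} [Fintype ι] (σ : ℝ) (X Xbar : Matrix ι κ ℝ) (Y Ybar : Matrix ι ν ℝ)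
    (P : Matrix ι ι ℝ) : Matrix κ ν ℝ :=
  Xᵀ * P * Y + σ ^ 2 • (Xbarᵀ * P * Ybar)

section MeanForm
variable {ι κ ν : Type*} [Fintype ι] (σ : ℝ)

lemma meanForm_sub (X Xbar : Matrix ι κ ℝ) (Y Ybar : Matrix ι ν ℝ) (P Q : Matrix ι ι ℝ) :
    meanForm σ X Xbar Y Ybar (P - Q) = meanForm σ X Xbar Y Ybar P - meanForm σ X Xbar Y Ybar Q := by
  simp only [meanForm, Matrix.mul_sub, Matrix.sub_mul, smul_sub]
  abel

lemma transpose_meanForm (X Xbar : Matrix ι κ ℝ) (Y Ybar : Matrix ι ν ℝ) (P : Matrix ι ι ℝ) :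
    (meanForm σ X Xbar Y Ybar P)ᵀ = meanForm σ Y Ybar X Xbar Pᵀ := by
  simp [meanForm, Matrix.transpose_mul, Matrix.mul_assoc]

lemma l2_opNorm_meanForm_le [DecidableEq ι] [Fintype κ] [DecidableEq κ] [Fintype ν] [DecidableEq ν]
    (X Xbar : Matrix ι κ ℝ) (Y Ybar : Matrix ι ν ℝ) (P : Matrix ι ι ℝ) :
    ‖meanForm σ X Xbar Y Ybar P‖ ≤ (‖X‖ * ‖Y‖ + σ ^ 2 * ‖Xbar‖ * ‖Ybar‖) * ‖P‖ := by
  have h₁ := Matrix.l2_opNorm_mul_mul_le Xᵀ P Y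
  have h₂ := Matrix.l2_opNorm_mul_mul_le Xbarᵀ P Ybar
  rw [Matrix.l2_opNorm_transpose] at h₁ h₂
  calc _ ≤ ‖Xᵀ * P * Y‖ + σ ^ 2 * ‖Xbarᵀ * P * Ybar‖ := by
        refine (norm_add_le _ _).trans_eq ?_
        rw [norm_smul, Real.norm_of_nonneg (sq_nonneg σ)]
    _ ≤ ‖X‖ * ‖P‖ * ‖Y‖ + σ ^ 2 * (‖Xbar‖ * ‖P‖ * ‖Ybar‖) := by gcongr
    _ = _ := by ring

lemma meanForm_sub_mul [Fintype ν] (X Xbar : Matrix ι κ ℝ) (Y Ybar : Matrix ι ν ℝ)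
    (K : Matrix ν κ ℝ) {P : Matrix ι ι ℝ} (hP : P.IsSymm) :
    meanForm σ (X - Y * K) (Xbar - Ybar * K) (X - Y * K) (Xbar - Ybar * K) P
      = meanForm σ X Xbar X Xbar P - meanForm σ X Xbar Y Ybar P * K
        - (meanForm σ X Xbar Y Ybar P * K)ᵀ + Kᵀ * meanForm σ Y Ybar Y Ybar P * K := by
  simp only [meanForm, Matrix.transpose_mul, Matrix.transpose_add, Matrix.transpose_smul,
    Matrix.transpose_sub, Matrix.transpose_transpose, hP.eq, Matrix.sub_mul, Matrix.mul_sub,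
    Matrix.add_mul, Matrix.mul_add, Matrix.smul_mul, Matrix.mul_smul, Matrix.mul_assoc]
  module

variable [Fintype κ] (X Xbar : Matrix ι κ ℝ) {P : Matrix ι ι ℝ}

lemma dotProduct_meanForm_mulVec (x : κ → ℝ) :
    x ⬝ᵥ meanForm σ X Xbar X Xbar P *ᵥ x
      = (X *ᵥ x) ⬝ᵥ P *ᵥ (X *ᵥ x) + σ ^ 2 * ((Xbar *ᵥ x) ⬝ᵥ P *ᵥ (Xbar *ᵥ x)) := by
  simp only [meanForm, Matrix.add_mulVec, Matrix.smul_mulVec, dotProduct_add, dotProduct_smul,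
    smul_eq_mul, ← Matrix.mulVec_mulVec, Matrix.dotProduct_mulVec _ Xᵀ,
    Matrix.dotProduct_mulVec _ Xbarᵀ, Matrix.vecMul_transpose]

lemma posSemidef_meanForm (hP : P.PosSemidef) :
    (meanForm σ X Xbar X Xbar P).PosSemidef := by
  have h₁ := hP.conjTranspose_mul_mul_same X
  have h₂ := hP.conjTranspose_mul_mul_same Xbar
  rw [Matrix.conjTranspose_eq_transpose_of_trivial] at h₁ h₂
  exact h₁.add (h₂.smul (sq_nonneg σ))

lemma trace_meanForm :
    (meanForm σ X Xbar X Xbar P).trace = (P * (X * Xᵀ + σ ^ 2 • (Xbar * Xbarᵀ))).trace := by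
  have h : ∀ Z : Matrix ι κ ℝ, (Zᵀ * P * Z).trace = (P * (Z * Zᵀ)).trace := fun Z => by
    rw [Matrix.trace_mul_comm, ← Matrix.mul_assoc, Matrix.trace_mul_comm]
  simp only [meanForm, Matrix.trace_add, Matrix.trace_smul, Matrix.mul_add, Matrix.mul_smul, h]

end MeanForm

section Slice
variable {n : ℕ} {a : ℝ} {P : Matrix (Fin n) (Fin n) ℝ}

lemma le_dotProduct_mulVec_of_mem_slice (hP : P ∈ Slice a) (x : Fin n → ℝ) :
    a * (x ⬝ᵥ x) ≤ x ⬝ᵥ P *ᵥ x := by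
  simpa [Matrix.sub_mulVec, Matrix.smul_mulVec] using hP.2.1.dotProduct_mulVec_nonneg x

lemma posSemidef_of_mem_slice (ha : 0 ≤ a) (hP : P ∈ Slice a) : P.PosSemidef := by
  simpa using hP.2.1.add (Matrix.PosSemidef.one.smul ha)

lemma l2_opNorm_le_one_of_mem_slice (ha : 0 ≤ a) (hP : P ∈ Slice a) : ‖P‖ ≤ 1 :=
  hP.2.2 ▸ (posSemidef_of_mem_slice ha hP).l2_opNorm_le_trace

lemma isClosed_slice (a : ℝ) : IsClosed (Slice a : Set (Matrix (Fin n) (Fin n) ℝ)) := by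
  have hpsd : {X : Matrix (Fin n) (Fin n) ℝ | (X - a • 1).PosSemidef}
      = {X | (X - a • 1)ᴴ = X - a • 1} ∩ ⋂ x, {X | 0 ≤ star x ⬝ᵥ (X - a • 1) *ᵥ x} := by
    ext X
    simp [Matrix.posSemidef_iff_dotProduct_mulVec, Matrix.IsHermitian]
  have hclosed : IsClosed {X : Matrix (Fin n) (Fin n) ℝ | (X - a • 1).PosSemidef} := by
    rw [hpsd]
    exact (isClosed_eq (by fun_prop) (by fun_prop)).inter
      (isClosed_iInter fun x => isClosed_le continuous_const (by fun_prop))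
  exact (isClosed_eq continuous_id.matrix_transpose continuous_id).inter
    (hclosed.inter (isClosed_eq continuous_id.matrix_trace continuous_const))

lemma inv_natCast_smul_one_mem_slice (hn : 0 < n) (ha : a ≤ (n : ℝ)⁻¹) :
    ((n : ℝ)⁻¹ • 1 : Matrix (Fin n) (Fin n) ℝ) ∈ Slice a := by
  have hpsd : (((n : ℝ)⁻¹ - a) • (1 : Matrix (Fin n) (Fin n) ℝ)).PosSemidef :=
    Matrix.PosSemidef.one.smul (sub_nonneg.mpr ha)
  refine ⟨by simp [Matrix.IsSymm], by simpa [sub_smul] using hpsd, ?_⟩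
  simp [Matrix.trace_smul, hn.ne']

end Slice

section DeltaTau
variable {n : ℕ} {σ : ℝ} {A Abar : Matrix (Fin n) (Fin n) ℝ} {τ : ℝ}

lemma CA_nonneg : 0 ≤ CA σ A Abar := by
  have h := (Matrix.posSemidef_self_mul_conjTranspose A).add
    ((Matrix.posSemidef_self_mul_conjTranspose Abar).smul (sq_nonneg σ))
  rw [Matrix.conjTranspose_eq_transpose_of_trivial,
    Matrix.conjTranspose_eq_transpose_of_trivial] at h
  exact lamMax_nonneg h

lemma le_one_sub_mul_CA_add (hτ : τ ∈ Set.Ioo (0 : ℝ) 1) : τ ≤ (1 - τ) * CA σ A Abar + τ :=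
  le_add_of_nonneg_left (mul_nonneg (sub_nonneg.mpr hτ.2.le) CA_nonneg)

lemma deltaTau_mul_eq (hτ : τ ∈ Set.Ioo (0 : ℝ) 1) :
    deltaTau σ A Abar τ * ((1 - τ) * CA σ A Abar + τ) = τ / n :=
  div_mul_cancel₀ _ (hτ.1.trans_le (le_one_sub_mul_CA_add hτ)).ne'

lemma deltaTau_pos (hn : 0 < n) (hτ : τ ∈ Set.Ioo (0 : ℝ) 1) : 0 < deltaTau σ A Abar τ :=
  div_pos (div_pos hτ.1 (by exact_mod_cast hn)) (hτ.1.trans_le (le_one_sub_mul_CA_add hτ))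

lemma deltaTau_le_inv (hτ : τ ∈ Set.Ioo (0 : ℝ) 1) : deltaTau σ A Abar τ ≤ (n : ℝ)⁻¹ :=
  calc deltaTau σ A Abar τ ≤ (τ / n) / τ :=
        div_le_div_of_nonneg_left (div_nonneg hτ.1.le (Nat.cast_nonneg n)) hτ.1
          (le_one_sub_mul_CA_add hτ)
    _ = (n : ℝ)⁻¹ := by field_simp [hτ.1.ne']

end DeltaTau

section Riccati
variable {n m : ℕ} (σ : ℝ) (A Abar : Matrix (Fin n) (Fin n) ℝ) (B Bbar : Matrix (Fin n) (Fin m) ℝ)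
  {a : ℝ} {P : Matrix (Fin n) (Fin n) ℝ}

lemma alphaA_eq : alphaA σ A Abar = ‖A‖ * ‖A‖ + σ ^ 2 * ‖Abar‖ * ‖Abar‖ := by
  simp only [alphaA, specNorm_eq_l2_opNorm]; ring

lemma alphaS_eq : alphaS σ A Abar B Bbar = ‖A‖ * ‖B‖ + σ ^ 2 * ‖Abar‖ * ‖Bbar‖ := by
  simp only [alphaS, specNorm_eq_l2_opNorm]

lemma alphaR_eq : alphaR σ B Bbar = ‖B‖ * ‖B‖ + σ ^ 2 * ‖Bbar‖ * ‖Bbar‖ := by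
  simp only [alphaR, specNorm_eq_l2_opNorm]; ring

lemma Rop_eq_meanForm (P : Matrix (Fin n) (Fin n) ℝ) :
    Rop σ B Bbar P = meanForm σ B Bbar B Bbar P := rfl

lemma Sop_eq_meanForm (P : Matrix (Fin n) (Fin n) ℝ) :
    Sop σ A Abar B Bbar P = meanForm σ A Abar B Bbar P := rfl

lemma Phi_eq_meanForm_sub (P : Matrix (Fin n) (Fin n) ℝ) :
    Phi σ A Abar B Bbar P = meanForm σ A Abar A Abar P
      - Sop σ A Abar B Bbar P * (Rop σ B Bbar P)⁻¹ * (Sop σ A Abar B Bbar P)ᵀ := rfl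

variable {σ A Abar B Bbar}

lemma le_dotProduct_Rop_mulVec (ha : 0 ≤ a) (hP : P ∈ Slice a) (x : Fin m → ℝ) :
    a * lamMin (Bᵀ * B + σ ^ 2 • (Bbarᵀ * Bbar)) * (x ⬝ᵥ x) ≤ x ⬝ᵥ Rop σ B Bbar P *ᵥ x := by
  have hR0 : x ⬝ᵥ (Bᵀ * B + σ ^ 2 • (Bbarᵀ * Bbar)) *ᵥ x
      = (B *ᵥ x) ⬝ᵥ (B *ᵥ x) + σ ^ 2 * ((Bbar *ᵥ x) ⬝ᵥ (Bbar *ᵥ x)) := by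
    simpa [meanForm] using dotProduct_meanForm_mulVec σ B Bbar (P := 1) x
  have hB := le_dotProduct_mulVec_of_mem_slice hP (B *ᵥ x)
  have hBbar := le_dotProduct_mulVec_of_mem_slice hP (Bbar *ᵥ x)
  rw [Rop_eq_meanForm, dotProduct_meanForm_mulVec]
  calc a * lamMin _ * (x ⬝ᵥ x)
      ≤ a * ((B *ᵥ x) ⬝ᵥ (B *ᵥ x) + σ ^ 2 * ((Bbar *ᵥ x) ⬝ᵥ (Bbar *ᵥ x))) := by
        rw [mul_assoc, ← hR0]
        exact mul_le_mul_of_nonneg_left (lamMin_mul_le_dotProduct_mulVec _ x) ha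
    _ ≤ _ := by nlinarith [sq_nonneg σ]

lemma Phi_eq_meanForm_closedLoop (hP : P.IsSymm) (hR : IsUnit (Rop σ B Bbar P).det) :
    Phi σ A Abar B Bbar P = meanForm σ (A - B * Kgain σ A Abar B Bbar P)
      (Abar - Bbar * Kgain σ A Abar B Bbar P) (A - B * Kgain σ A Abar B Bbar P)
      (Abar - Bbar * Kgain σ A Abar B Bbar P) P := by
  rw [meanForm_sub_mul σ A Abar B Bbar _ hP]
  rw [Phi_eq_meanForm_sub, ← Sop_eq_meanForm σ A Abar B Bbar, ← Rop_eq_meanForm σ B Bbar]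
  have hRinv : ((Rop σ B Bbar P)⁻¹)ᵀ = (Rop σ B Bbar P)⁻¹ := by
    rw [Matrix.transpose_nonsing_inv, Rop_eq_meanForm, transpose_meanForm, hP.eq]
  set R := Rop σ B Bbar P
  set S := Sop σ A Abar B Bbar P
  have h₁ : S * Kgain σ A Abar B Bbar P = S * R⁻¹ * Sᵀ := by
    rw [Kgain, Matrix.mul_assoc]
  have h₂ : (Kgain σ A Abar B Bbar P)ᵀ * R * Kgain σ A Abar B Bbar P = S * R⁻¹ * Sᵀ := by
    rw [Kgain, Matrix.transpose_mul, Matrix.transpose_transpose, hRinv, Matrix.mul_assoc S,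
      Matrix.mul_assoc, Matrix.mul_assoc, ← Matrix.mul_assoc R, Matrix.mul_nonsing_inv _ hR,
      Matrix.one_mul, Matrix.mul_assoc]
  rw [h₁, h₂, Matrix.transpose_mul, Matrix.transpose_mul, Matrix.transpose_transpose, hRinv,
    ← Matrix.mul_assoc]
  abel

lemma isUnit_det_Rop (hm : 0 < m) (hR0 : (Bᵀ * B + σ ^ 2 • (Bbarᵀ * Bbar)).PosDef) (ha : 0 < a)
    (hP : P ∈ Slice a) : IsUnit (Rop σ B Bbar P).det :=
  Matrix.isUnit_det_of_le_dotProduct (mul_pos ha (lamMin_pos hm hR0))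
    (le_dotProduct_Rop_mulVec ha.le hP)

lemma l2_opNorm_Rop_inv_le (hm : 0 < m) (hR0 : (Bᵀ * B + σ ^ 2 • (Bbarᵀ * Bbar)).PosDef)
    (ha : 0 < a) (hP : P ∈ Slice a) : ‖(Rop σ B Bbar P)⁻¹‖ ≤ cR σ B Bbar a := by
  rw [cR, one_div]
  exact Matrix.l2_opNorm_inv_le_of_le_dotProduct (mul_pos ha (lamMin_pos hm hR0))
    (le_dotProduct_Rop_mulVec ha.le hP)

lemma cR_nonneg (hm : 0 < m) (hR0 : (Bᵀ * B + σ ^ 2 • (Bbarᵀ * Bbar)).PosDef) (ha : 0 < a) :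
    0 ≤ cR σ B Bbar a := by
  rw [cR]; have := lamMin_pos hm hR0; positivity

end Riccati

section PhiBounds
variable {n m : ℕ} {σ : ℝ} {A Abar : Matrix (Fin n) (Fin n) ℝ} {B Bbar : Matrix (Fin n) (Fin m) ℝ}
  {a : ℝ} {P Q : Matrix (Fin n) (Fin n) ℝ}

lemma Phi_posSemidef (hm : 0 < m) (hR0 : (Bᵀ * B + σ ^ 2 • (Bbarᵀ * Bbar)).PosDef) (ha : 0 < a)
    (hP : P ∈ Slice a) : (Phi σ A Abar B Bbar P).PosSemidef := by
  rw [Phi_eq_meanForm_closedLoop hP.1 (isUnit_det_Rop hm hR0 ha hP)]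
  exact posSemidef_meanForm σ _ _ (posSemidef_of_mem_slice ha.le hP)

lemma trace_Phi_le_CA (ha : 0 ≤ a) (hP : P ∈ Slice a) :
    (Phi σ A Abar B Bbar P).trace ≤ CA σ A Abar := by
  have hPsd := posSemidef_of_mem_slice ha hP
  have hSRS :
      (Sop σ A Abar B Bbar P * (Rop σ B Bbar P)⁻¹ * (Sop σ A Abar B Bbar P)ᵀ).PosSemidef := by
    have := (posSemidef_meanForm σ B Bbar hPsd).inv.mul_mul_conjTranspose_same
      (Sop σ A Abar B Bbar P)
    rwa [Matrix.conjTranspose_eq_transpose_of_trivial] at this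
  have hN : (A * Aᵀ + σ ^ 2 • (Abar * Abarᵀ)).IsSymm := by
    simp [Matrix.IsSymm, Matrix.transpose_mul]
  calc (Phi σ A Abar B Bbar P).trace ≤ (meanForm σ A Abar A Abar P).trace := by
        rw [Phi_eq_meanForm_sub, Matrix.trace_sub]; linarith [hSRS.trace_nonneg]
    _ ≤ CA σ A Abar := by
        rw [trace_meanForm, CA]
        simpa [hP.2.2] using trace_mul_le_lamMax_mul_trace hPsd hN

lemma l2_opNorm_meanForm_le_of_mem_slice {κ ν : Type*} [Fintype κ] [DecidableEq κ] [Fintype ν]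
    [DecidableEq ν] (X Xbar : Matrix (Fin n) κ ℝ) (Y Ybar : Matrix (Fin n) ν ℝ) (ha : 0 ≤ a)
    (hP : P ∈ Slice a) :
    ‖meanForm σ X Xbar Y Ybar P‖ ≤ ‖X‖ * ‖Y‖ + σ ^ 2 * ‖Xbar‖ * ‖Ybar‖ :=
  (l2_opNorm_meanForm_le σ X Xbar Y Ybar P).trans
    (mul_le_of_le_one_right (by positivity) (l2_opNorm_le_one_of_mem_slice ha hP))

lemma l2_opNorm_Phi_le (hm : 0 < m) (hR0 : (Bᵀ * B + σ ^ 2 • (Bbarᵀ * Bbar)).PosDef) (ha : 0 < a)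
    (hP : P ∈ Slice a) : ‖Phi σ A Abar B Bbar P‖ ≤ CPhi σ A Abar B Bbar a := by
  have hS : ‖Sop σ A Abar B Bbar P‖ ≤ alphaS σ A Abar B Bbar := by
    rw [alphaS_eq]; exact l2_opNorm_meanForm_le_of_mem_slice A Abar B Bbar ha.le hP
  have hQ : ‖meanForm σ A Abar A Abar P‖ ≤ alphaA σ A Abar := by
    rw [alphaA_eq]; exact l2_opNorm_meanForm_le_of_mem_slice A Abar A Abar ha.le hP
  have hSRS := Matrix.l2_opNorm_mul_mul_le (Sop σ A Abar B Bbar P) (Rop σ B Bbar P)⁻¹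
    (Sop σ A Abar B Bbar P)ᵀ
  rw [Matrix.l2_opNorm_transpose] at hSRS
  have hc := l2_opNorm_Rop_inv_le hm hR0 ha hP
  have hαS : 0 ≤ alphaS σ A Abar B Bbar := (norm_nonneg _).trans hS
  calc ‖Phi σ A Abar B Bbar P‖
      ≤ ‖meanForm σ A Abar A Abar P‖
        + ‖Sop σ A Abar B Bbar P‖ * ‖(Rop σ B Bbar P)⁻¹‖ * ‖Sop σ A Abar B Bbar P‖ :=
        (norm_sub_le _ _).trans (add_le_add le_rfl hSRS)
    _ ≤ alphaA σ A Abar + alphaS σ A Abar B Bbar * cR σ B Bbar a * alphaS σ A Abar B Bbar :=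
        add_le_add hQ <| mul_le_mul (mul_le_mul hS hc (norm_nonneg _) hαS) hS (norm_nonneg _)
          (mul_nonneg hαS (cR_nonneg hm hR0 ha))
    _ = CPhi σ A Abar B Bbar a := by rw [CPhi]; ring

lemma l2_opNorm_Phi_sub_le (hm : 0 < m) (hR0 : (Bᵀ * B + σ ^ 2 • (Bbarᵀ * Bbar)).PosDef)
    (ha : 0 < a) (hP : P ∈ Slice a) (hQ : Q ∈ Slice a) :
    ‖Phi σ A Abar B Bbar P - Phi σ A Abar B Bbar Q‖ ≤ LPhi σ A Abar B Bbar a * ‖P - Q‖ := by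
  have hS : ∀ {X}, X ∈ Slice a → ‖Sop σ A Abar B Bbar X‖ ≤ alphaS σ A Abar B Bbar := fun hX => by
    rw [alphaS_eq]; exact l2_opNorm_meanForm_le_of_mem_slice A Abar B Bbar ha.le hX
  have hschur := Matrix.l2_opNorm_mul_inv_mul_transpose_sub_le (isUnit_det_Rop hm hR0 ha hP)
    (isUnit_det_Rop hm hR0 ha hQ) (hS hP) (hS hQ) (l2_opNorm_Rop_inv_le hm hR0 ha hP)
    (l2_opNorm_Rop_inv_le hm hR0 ha hQ)
  have hΔS :
      ‖Sop σ A Abar B Bbar P - Sop σ A Abar B Bbar Q‖ ≤ alphaS σ A Abar B Bbar * ‖P - Q‖ := by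
    rw [Sop_eq_meanForm, Sop_eq_meanForm, ← meanForm_sub, alphaS_eq]
    exact l2_opNorm_meanForm_le σ A Abar B Bbar (P - Q)
  have hΔR : ‖Rop σ B Bbar P - Rop σ B Bbar Q‖ ≤ alphaR σ B Bbar * ‖P - Q‖ := by
    rw [Rop_eq_meanForm, Rop_eq_meanForm, ← meanForm_sub, alphaR_eq]
    exact l2_opNorm_meanForm_le σ B Bbar B Bbar (P - Q)
  have hΔQ : ‖meanForm σ A Abar A Abar (P - Q)‖ ≤ alphaA σ A Abar * ‖P - Q‖ := by
    rw [alphaA_eq]; exact l2_opNorm_meanForm_le σ A Abar A Abar (P - Q)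
  have hsplit : Phi σ A Abar B Bbar P - Phi σ A Abar B Bbar Q = meanForm σ A Abar A Abar (P - Q)
      - (Sop σ A Abar B Bbar P * (Rop σ B Bbar P)⁻¹ * (Sop σ A Abar B Bbar P)ᵀ
        - Sop σ A Abar B Bbar Q * (Rop σ B Bbar Q)⁻¹ * (Sop σ A Abar B Bbar Q)ᵀ) := by
    rw [meanForm_sub, Phi_eq_meanForm_sub, Phi_eq_meanForm_sub]
    abel
  have hc := cR_nonneg hm hR0 ha (B := B) (Bbar := Bbar)
  rw [hsplit]
  calc _ ≤ alphaA σ A Abar * ‖P - Q‖ + (2 * alphaS σ A Abar B Bbar * cR σ B Bbar a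
          * (alphaS σ A Abar B Bbar * ‖P - Q‖)
        + alphaS σ A Abar B Bbar ^ 2 * cR σ B Bbar a ^ 2 * (alphaR σ B Bbar * ‖P - Q‖)) := by
        refine (norm_sub_le _ _).trans (add_le_add hΔQ (hschur.trans ?_))
        have : 0 ≤ alphaS σ A Abar B Bbar := (norm_nonneg _).trans (hS hP)
        gcongr
    _ = LPhi σ A Abar B Bbar a * ‖P - Q‖ := by rw [LPhi]; ring

lemma CPhi_nonneg (hm : 0 < m) (hR0 : (Bᵀ * B + σ ^ 2 • (Bbarᵀ * Bbar)).PosDef) (ha : 0 < a) :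
    0 ≤ CPhi σ A Abar B Bbar a := by
  have hαA : 0 ≤ alphaA σ A Abar := by rw [alphaA_eq]; positivity
  exact add_nonneg hαA (mul_nonneg (sq_nonneg _) (cR_nonneg hm hR0 ha))

lemma LPhi_nonneg (hm : 0 < m) (hR0 : (Bᵀ * B + σ ^ 2 • (Bbarᵀ * Bbar)).PosDef) (ha : 0 < a) :
    0 ≤ LPhi σ A Abar B Bbar a := by
  have hαA : 0 ≤ alphaA σ A Abar := by rw [alphaA_eq]; positivity
  have hαR : 0 ≤ alphaR σ B Bbar := by rw [alphaR_eq]; positivity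
  have hc := cR_nonneg hm hR0 ha
  exact add_nonneg (add_nonneg hαA (mul_nonneg (by positivity) hc))
    (mul_nonneg (mul_nonneg (sq_nonneg _) hαR) (sq_nonneg _))

end PhiBounds

section Normalized
variable {n m : ℕ} {σ : ℝ} {A Abar : Matrix (Fin n) (Fin n) ℝ} {B Bbar : Matrix (Fin n) (Fin m) ℝ}
  {τ : ℝ} {P Q : Matrix (Fin n) (Fin n) ℝ}

lemma trace_regularized (hn : 0 < n) (M : Matrix (Fin n) (Fin n) ℝ) :
    ((1 - τ) • M + (τ / n) • (1 : Matrix (Fin n) (Fin n) ℝ)).trace = (1 - τ) * M.trace + τ := by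
  simp [Matrix.trace_smul, hn.ne']

lemma LambdaTau_eq (σ : ℝ) (A Abar : Matrix (Fin n) (Fin n) ℝ) (B Bbar : Matrix (Fin n) (Fin m) ℝ)
    (τ : ℝ) : LambdaTau σ A Abar B Bbar τ
      = (τ⁻¹ + n * ((1 - τ) * CPhi σ A Abar B Bbar (deltaTau σ A Abar τ) + τ / n) / τ ^ 2)
        * ((1 - τ) * LPhi σ A Abar B Bbar (deltaTau σ A Abar τ)) := by
  rw [LambdaTau]; ring

lemma PhiHat_mem_slice (hn : 0 < n) (hm : 0 < m) (hR0 : (Bᵀ * B + σ ^ 2 • (Bbarᵀ * Bbar)).PosDef)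
    (hτ : τ ∈ Set.Ioo (0 : ℝ) 1) (hP : P ∈ Slice (deltaTau σ A Abar τ)) :
    PhiHat σ A Abar B Bbar τ P ∈ Slice (deltaTau σ A Abar τ) := by
  set δ := deltaTau σ A Abar τ
  have hδ : 0 < δ := deltaTau_pos hn hτ
  have hΦ := Phi_posSemidef (A := A) (Abar := Abar) hm hR0 hδ hP
  set s := (1 - τ) * (Phi σ A Abar B Bbar P).trace + τ
  have hs : 0 < s := by nlinarith [hΦ.trace_nonneg, hτ.1, hτ.2]
  have hsδ : s * δ ≤ τ / n := by
    have h1τ : 0 ≤ 1 - τ := sub_nonneg.mpr hτ.2.le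
    have := trace_Phi_le_CA (σ := σ) (A := A) (Abar := Abar) (B := B) (Bbar := Bbar) hδ.le hP
    have hsCA : s ≤ (1 - τ) * CA σ A Abar + τ := by
      show (1 - τ) * _ + τ ≤ _
      gcongr
    rw [← deltaTau_mul_eq hτ, mul_comm s]
    gcongr
  have hPhiHat : PhiHat σ A Abar B Bbar τ P
      = s⁻¹ • ((1 - τ) • Phi σ A Abar B Bbar P + (τ / n) • 1) := by
    rw [PhiHat, trace_regularized hn]
  have hsub : PhiHat σ A Abar B Bbar τ P - δ • 1
      = s⁻¹ • ((1 - τ) • Phi σ A Abar B Bbar P + (τ / n - s * δ) • 1) := by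
    rw [hPhiHat]
    match_scalars <;> field_simp
  refine ⟨?_, ?_, ?_⟩
  · rw [hPhiHat]
    exact ((Matrix.isHermitian_iff_isSymm.mp hΦ.1).smul _ |>.add (Matrix.isSymm_one.smul _)).smul _
  · rw [hsub]
    exact ((hΦ.smul (sub_nonneg.mpr hτ.2.le)).add
      (Matrix.PosSemidef.one.smul (sub_nonneg.mpr hsδ))).smul (inv_nonneg.mpr hs.le)
  · rw [hPhiHat, Matrix.trace_smul, trace_regularized hn, smul_eq_mul, inv_mul_cancel₀ hs.ne']

lemma l2_opNorm_PhiHat_sub_le (hn : 0 < n) (hm : 0 < m)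
    (hR0 : (Bᵀ * B + σ ^ 2 • (Bbarᵀ * Bbar)).PosDef) (hτ : τ ∈ Set.Ioo (0 : ℝ) 1)
    (hP : P ∈ Slice (deltaTau σ A Abar τ)) (hQ : Q ∈ Slice (deltaTau σ A Abar τ)) :
    ‖PhiHat σ A Abar B Bbar τ P - PhiHat σ A Abar B Bbar τ Q‖
      ≤ LambdaTau σ A Abar B Bbar τ * ‖P - Q‖ := by
  set δ := deltaTau σ A Abar τ
  have hδ : 0 < δ := deltaTau_pos hn hτ
  have h1τ : 0 ≤ 1 - τ := sub_nonneg.mpr hτ.2.le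
  have htrace : ∀ {X}, X ∈ Slice δ →
      τ ≤ ((1 - τ) • Phi σ A Abar B Bbar X + (τ / n) • (1 : Matrix (Fin n) (Fin n) ℝ)).trace :=
    fun hX => by
      rw [trace_regularized hn]
      nlinarith [(Phi_posSemidef (A := A) (Abar := Abar) hm hR0 hδ hX).trace_nonneg]
  have hGQ : ‖(1 - τ) • Phi σ A Abar B Bbar Q + (τ / n) • (1 : Matrix (Fin n) (Fin n) ℝ)‖
      ≤ (1 - τ) * CPhi σ A Abar B Bbar δ + τ / n := by
    have hτn : 0 ≤ τ / n := div_nonneg hτ.1.le (Nat.cast_nonneg n)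
    refine (norm_add_le _ _).trans (add_le_add ?_ ?_)
    · rw [norm_smul, Real.norm_of_nonneg h1τ]
      exact mul_le_mul_of_nonneg_left (l2_opNorm_Phi_le hm hR0 hδ hQ) h1τ
    · rw [norm_smul, Real.norm_of_nonneg hτn]
      exact mul_le_of_le_one_right hτn Matrix.l2_opNorm_one_le
  have hG : (1 - τ) • Phi σ A Abar B Bbar P + (τ / n) • (1 : Matrix (Fin n) (Fin n) ℝ)
      - ((1 - τ) • Phi σ A Abar B Bbar Q + (τ / n) • 1)
      = (1 - τ) • (Phi σ A Abar B Bbar P - Phi σ A Abar B Bbar Q) := by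
    rw [smul_sub]; abel
  have hΦ := l2_opNorm_Phi_sub_le hm hR0 hδ hP hQ (A := A) (Abar := Abar)
  have key := Matrix.l2_opNorm_trace_inv_smul_sub_le hτ.1 (htrace hP) (htrace hQ)
  rw [Fintype.card_fin, hG, norm_smul, Real.norm_of_nonneg h1τ] at key
  have hfactor :
      τ⁻¹ + n * ‖(1 - τ) • Phi σ A Abar B Bbar Q + (τ / n) • (1 : Matrix (Fin n) (Fin n) ℝ)‖ / τ ^ 2
        ≤ τ⁻¹ + n * ((1 - τ) * CPhi σ A Abar B Bbar δ + τ / n) / τ ^ 2 := by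
    gcongr
  calc _ ≤ _ := key
    _ ≤ (τ⁻¹ + n * ((1 - τ) * CPhi σ A Abar B Bbar δ + τ / n) / τ ^ 2)
        * ((1 - τ) * (LPhi σ A Abar B Bbar δ * ‖P - Q‖)) :=
        mul_le_mul hfactor (mul_le_mul_of_nonneg_left hΦ h1τ) (by positivity)
          ((add_nonneg (inv_nonneg.mpr hτ.1.le) (by positivity)).trans hfactor)
    _ = LambdaTau σ A Abar B Bbar τ * ‖P - Q‖ := by rw [LambdaTau_eq]; ring

lemma LambdaTau_nonneg (hn : 0 < n) (hm : 0 < m) (hR0 : (Bᵀ * B + σ ^ 2 • (Bbarᵀ * Bbar)).PosDef)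
    (hτ : τ ∈ Set.Ioo (0 : ℝ) 1) : 0 ≤ LambdaTau σ A Abar B Bbar τ := by
  have hδ := deltaTau_pos hn hτ (σ := σ) (A := A) (Abar := Abar)
  have h1τ : 0 ≤ 1 - τ := sub_nonneg.mpr hτ.2.le
  have hC := CPhi_nonneg hm hR0 hδ (A := A) (Abar := Abar)
  have hL := LPhi_nonneg hm hR0 hδ (A := A) (Abar := Abar)
  have hτn : 0 ≤ τ / n := div_nonneg hτ.1.le (Nat.cast_nonneg n)
  have hτinv : 0 ≤ τ⁻¹ := inv_nonneg.mpr hτ.1.le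
  rw [LambdaTau_eq]
  positivity

end Normalized

theorem rnvi_contraction_general {n m : ℕ} (hn : 0 < n) (hm : 0 < m)
    (σ : ℝ)
    (A Abar : Matrix (Fin n) (Fin n) ℝ) (B Bbar : Matrix (Fin n) (Fin m) ℝ)
    (hR0 : (Bᵀ * B + σ ^ 2 • (Bbarᵀ * Bbar)).PosDef)
    (τ : ℝ) (hτ : τ ∈ Set.Ioo (0 : ℝ) 1) :
    (∀ P Q : Matrix (Fin n) (Fin n) ℝ,
      P ∈ Slice (deltaTau σ A Abar τ) → Q ∈ Slice (deltaTau σ A Abar τ) →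
      specNorm (PhiHat σ A Abar B Bbar τ P - PhiHat σ A Abar B Bbar τ Q)
        ≤ LambdaTau σ A Abar B Bbar τ * specNorm (P - Q)) ∧
    (LambdaTau σ A Abar B Bbar τ < 1 →
      ∃ Pfix : Matrix (Fin n) (Fin n) ℝ,
        Pfix ∈ Slice (deltaTau σ A Abar τ) ∧ PhiHat σ A Abar B Bbar τ Pfix = Pfix ∧
        (∀ Q : Matrix (Fin n) (Fin n) ℝ, Q ∈ Slice (deltaTau σ A Abar τ) →
          PhiHat σ A Abar B Bbar τ Q = Q → Q = Pfix) ∧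
        (∀ Pseq : ℕ → Matrix (Fin n) (Fin n) ℝ,
          Pseq 0 ∈ Slice (deltaTau σ A Abar τ) →
          (∀ k : ℕ, Pseq (k + 1) = PhiHat σ A Abar B Bbar τ (Pseq k)) →
          ∀ k : ℕ, specNorm (Pseq k - Pfix)
            ≤ LambdaTau σ A Abar B Bbar τ ^ k * specNorm (Pseq 0 - Pfix))) := by
  have hlip : ∀ P ∈ Slice (deltaTau σ A Abar τ), ∀ Q ∈ Slice (deltaTau σ A Abar τ),
      dist (PhiHat σ A Abar B Bbar τ P) (PhiHat σ A Abar B Bbar τ Q)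
        ≤ LambdaTau σ A Abar B Bbar τ * dist P Q := fun P hP Q hQ => by
    simpa only [dist_eq_norm] using l2_opNorm_PhiHat_sub_le hn hm hR0 hτ hP hQ
  simp only [specNorm_eq_l2_opNorm, ← dist_eq_norm]
  refine ⟨fun P Q hP hQ => hlip P hP Q hQ, fun hΛ => ?_⟩
  exact exists_unique_fixedPoint_of_dist_le (isClosed_slice _)
    ⟨_, inv_natCast_smul_one_mem_slice hn (deltaTau_le_inv hτ)⟩
    (fun P hP => PhiHat_mem_slice hn hm hR0 hτ hP) (LambdaTau_nonneg hn hm hR0 hτ) hΛ hlip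

/-- The regularized normalized operator is `Λ(τ)`-Lipschitz on
the slice `S_{δ_τ}`; if `Λ(τ) < 1` it has a unique fixed point there, and the
RNVI iterates converge globally and linearly to it. -/
theorem rnvi_contraction {n m : ℕ} (hn : 0 < n) (hm : 0 < m)
    (σ : ℝ) (hσ : 0 < σ)
    (A Abar : Matrix (Fin n) (Fin n) ℝ) (B Bbar : Matrix (Fin n) (Fin m) ℝ)
    (hR0 : (Bᵀ * B + σ ^ 2 • (Bbarᵀ * Bbar)).PosDef)
    (τ : ℝ) (hτ : τ ∈ Set.Ioo (0 : ℝ) 1) :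
    (∀ P Q : Matrix (Fin n) (Fin n) ℝ,
      P ∈ Slice (deltaTau σ A Abar τ) → Q ∈ Slice (deltaTau σ A Abar τ) →
      specNorm (PhiHat σ A Abar B Bbar τ P - PhiHat σ A Abar B Bbar τ Q)
        ≤ LambdaTau σ A Abar B Bbar τ * specNorm (P - Q)) ∧
    (LambdaTau σ A Abar B Bbar τ < 1 →
      ∃ Pfix : Matrix (Fin n) (Fin n) ℝ,
        Pfix ∈ Slice (deltaTau σ A Abar τ) ∧ PhiHat σ A Abar B Bbar τ Pfix = Pfix ∧
        (∀ Q : Matrix (Fin n) (Fin n) ℝ, Q ∈ Slice (deltaTau σ A Abar τ) →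
          PhiHat σ A Abar B Bbar τ Q = Q → Q = Pfix) ∧
        (∀ Pseq : ℕ → Matrix (Fin n) (Fin n) ℝ,
          Pseq 0 ∈ Slice (deltaTau σ A Abar τ) →
          (∀ k : ℕ, Pseq (k + 1) = PhiHat σ A Abar B Bbar τ (Pseq k)) →
          ∀ k : ℕ, specNorm (Pseq k - Pfix)
            ≤ LambdaTau σ A Abar B Bbar τ ^ k * specNorm (Pseq 0 - Pfix))) :=
  rnvi_contraction_general hn hm σ A Abar B Bbar hR0 τ hτ

end SCS
end
end
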